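/- arXiv:2002.09942 — 6 statements merged into one kernel-verified Lean document; each statement's English description precedes it below -/
import Mathlib

section
/- Let t be a D-tree for a countable set of directions D, and let B be a Borel set of branches of t. Then B is large if and only if there exists a dense set of nodes W ⊆ t such that B(W) ⊆ B, where B(W) is the set of branches having infinitely many prefixes in W. -/
/-- A `D`-tree: a prefix-closed set of finite words over `D` containing the root
and in which every node has at least one child. -/
structure DTree (D : Type) where
  nodes : Set (List D)
  root_mem : ([] : List D) ∈ nodes
  prefix_closed : ∀ ⦃u v : List D⦄, u <+: v → v ∈ nodes → u ∈ nodes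
  no_leaf : ∀ u ∈ nodes, ∃ d, u ++ [d] ∈ nodes

/-- The prefix of length `n` of the infinite word `b`. -/
def listPref {D : Type} (b : ℕ → D) (n : ℕ) : List D :=
  List.ofFn (fun j : Fin n => b j.1)

/-- `b` is a branch of the tree `t`: all of its finite prefixes are nodes of `t`. -/
def IsBranch {D : Type} (t : DTree D) (b : ℕ → D) : Prop :=
  ∀ n, listPref b n ∈ t.nodes

/-- A set `B` of branches is nowhere dense in `t`: every node of `t` has a
descendant in `t` lying on no branch of `B`. -/
def NowhereDenseT {D : Type} (t : DTree D) (B : Set (ℕ → D)) : Prop :=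
  ∀ u ∈ t.nodes, ∃ v ∈ t.nodes, u <+: v ∧ ∀ b ∈ B, listPref b v.length ≠ v

/-- A set of branches is meager in `t`: a countable union of nowhere dense sets. -/
def MeagerT {D : Type} (t : DTree D) (B : Set (ℕ → D)) : Prop :=
  ∃ f : ℕ → Set (ℕ → D), (∀ n, NowhereDenseT t (f n)) ∧ B ⊆ ⋃ n, f n

/-- A set of branches is large in `t`: its complement (within the set of branches
of `t`) is meager. -/
def LargeT {D : Type} (t : DTree D) (B : Set (ℕ → D)) : Prop :=
  MeagerT t ({b | IsBranch t b} \ B)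

/-- A set `W` of nodes is dense in `t`: every node of `t` has a descendant in `W`. -/
def DenseN {D : Type} (t : DTree D) (W : Set (List D)) : Prop :=
  ∀ u ∈ t.nodes, ∃ v ∈ W, u <+: v

/-- `B(W)`: the set of branches of `t` having infinitely many prefixes in `W`. -/
def BranchesThru {D : Type} (t : DTree D) (W : Set (List D)) : Set (ℕ → D) :=
  {b | IsBranch t b ∧ {n | listPref b n ∈ W}.Infinite}

/-- The topology on the set of branches of `t` generated by the cones. -/
def branchTopology {D : Type} (t : DTree D) : TopologicalSpace {b : ℕ → D // IsBranch t b} :=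
  TopologicalSpace.generateFrom
    {s | ∃ u ∈ t.nodes, s = {b : {b : ℕ → D // IsBranch t b} | listPref b.1 u.length = u}}

/-- The direction mapping `d` points to `W`: from every node `u` of `t`, following
`d` leads (in finitely many steps) to a node of `W`. -/
def PointsTo {D : Type} (t : DTree D) (d : List D → D) (W : Set (List D)) : Prop :=
  ∀ u ∈ t.nodes, ∃ l : List D, u ++ l ∈ W ∧
    ∀ i : Fin l.length, l.get i = d (u ++ l.take i.1)
namespace Stmt5Aux

variable {D : Type}

lemma listPref_length (b : ℕ → D) (n : ℕ) : (listPref b n).length = n := by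
  simp [listPref]

lemma take_listPref (b : ℕ → D) {m n : ℕ} (h : m ≤ n) :
    (listPref b n).take m = listPref b m := by
  apply List.ext_getElem
  · simp [listPref]; omega
  · intro i h1 h2
    simp_all [listPref, List.getElem_take]

lemma prefix_listPref {b : ℕ → D} {u v : List D}
    (hv : listPref b v.length = v) (hu : u <+: v) : listPref b u.length = u := by
  have h := List.prefix_iff_eq_take.mp hu
  calc listPref b u.length = (listPref b v.length).take u.length :=
        (take_listPref b hu.length_le).symm
    _ = v.take u.length := by rw [hv]
    _ = u := h.symm

/-- `v` avoids the set of branches `S`: no branch of `S` passes through `v`. -/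
def Avoids (S : Set (ℕ → D)) (v : List D) : Prop :=
  ∀ b ∈ S, listPref b v.length ≠ v

lemma Avoids.mono {S : Set (ℕ → D)} {v v' : List D}
    (h : Avoids S v) (hp : v <+: v') : Avoids S v' := by
  intro b hb hv'
  exact h b hb (prefix_listPref hv' hp)

lemma Avoids.anti {S S' : Set (ℕ → D)} {v : List D}
    (h : Avoids S v) (hs : S' ⊆ S) : Avoids S' v :=
  fun b hb => h b (hs hb)

lemma exists_long_ext (t : DTree D) {u : List D} (hu : u ∈ t.nodes) (k : ℕ) :
    ∃ v ∈ t.nodes, u <+: v ∧ v.length = u.length + k := by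
  induction k with
  | zero => exact ⟨u, hu, List.prefix_refl u, rfl⟩
  | succ k ih =>
    obtain ⟨v, hv, huv, hlen⟩ := ih
    obtain ⟨d, hd⟩ := t.no_leaf v hv
    exact ⟨v ++ [d], hd, huv.trans ⟨[d], rfl⟩, by simp [hlen]; omega⟩

/-- Increasing unions of the given nowhere dense sets. -/
def Fcup (f : ℕ → Set (ℕ → D)) (n : ℕ) : Set (ℕ → D) := ⋃ i ≤ n, f i

lemma subset_Fcup (f : ℕ → Set (ℕ → D)) {i n : ℕ} (h : i ≤ n) : f i ⊆ Fcup f n :=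
  fun b hb => Set.mem_biUnion h hb

lemma Fcup_mono (f : ℕ → Set (ℕ → D)) {m n : ℕ} (h : m ≤ n) : Fcup f m ⊆ Fcup f n := by
  intro b hb
  obtain ⟨i, hi, hbi⟩ := Set.mem_iUnion₂.1 hb
  exact Set.mem_biUnion (hi.trans h) hbi

lemma nwd_Fcup {t : DTree D} {f : ℕ → Set (ℕ → D)}
    (h : ∀ n, NowhereDenseT t (f n)) (n : ℕ) : NowhereDenseT t (Fcup f n) := by
  induction n with
  | zero =>
    intro u hu
    obtain ⟨v, hv, huv, hav⟩ := h 0 u hu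
    refine ⟨v, hv, huv, fun b hb => ?_⟩
    obtain ⟨i, hi, hbi⟩ := Set.mem_iUnion₂.1 hb
    exact hav b (Nat.le_zero.1 hi ▸ hbi)
  | succ n ih =>
    intro u hu
    obtain ⟨v, hv, huv, hav⟩ := ih u hu
    obtain ⟨v', hv', hvv', hav'⟩ := h (n + 1) v hv
    refine ⟨v', hv', huv.trans hvv', fun b hb => ?_⟩
    obtain ⟨i, hi, hbi⟩ := Set.mem_iUnion₂.1 hb
    rcases Nat.lt_or_ge i (n + 1) with hi' | hi'
    · exact (Avoids.mono hav hvv') b (subset_Fcup f (Nat.lt_succ_iff.1 hi') hbi)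
    · have : i = n + 1 := le_antisymm hi hi'
      exact hav' b (this ▸ hbi)
  

open Classical in
/-- The dense witness set, defined by strong recursion on length: `v ∈ W` iff
`v` is a node avoiding `F n`, where `n` is the number of proper prefixes of `v`
that belong to `W`. -/
noncomputable def Wmem (t : DTree D) (F : ℕ → Set (ℕ → D)) (v : List D) : Prop :=
  v ∈ t.nodes ∧
    Avoids (F ((Finset.range v.length).attach.filter
      (fun k => Wmem t F (v.take k.1))).card) v
  termination_by v.length
  decreasing_by
    all_goals exact lt_of_le_of_lt (List.length_take_le _ _) (Finset.mem_range.1 (Subtype.prop _))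

open Classical in
/-- The number of proper prefixes of `v` lying in `W`. -/
noncomputable def cnt (t : DTree D) (F : ℕ → Set (ℕ → D)) (v : List D) : ℕ :=
  ((Finset.range v.length).filter (fun k => Wmem t F (v.take k))).card

open Classical in
lemma Wmem_iff (t : DTree D) (F : ℕ → Set (ℕ → D)) (v : List D) :
    Wmem t F v ↔ v ∈ t.nodes ∧ Avoids (F (cnt t F v)) v := by
  rw [Wmem]
  have h : ((Finset.range v.length).attach.filter
      (fun k => Wmem t F (v.take k.1))).card = cnt t F v := by
    rw [cnt]
    refine Finset.card_bij (fun k _ => k.1) ?_ ?_ ?_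
    · intro a ha
      simp only [Finset.mem_filter] at ha ⊢
      exact ⟨a.2, ha.2⟩
    · intro a _ b _ hab
      exact Subtype.ext hab
    · intro b hb
      simp only [Finset.mem_filter] at hb
      exact ⟨⟨b, hb.1⟩, by simp [hb.2], rfl⟩
  rw [h]

lemma take_eq_of_prefix {u v : List D} (huv : u <+: v) {k : ℕ} (hk : k ≤ u.length) :
    v.take k = u.take k := by
  have h := List.prefix_iff_eq_take.mp huv
  rw [h, List.take_take, min_eq_left hk]

lemma prefix_take_of_le {u v : List D} (huv : u <+: v) {k : ℕ} (hk : u.length ≤ k) :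
    u <+: v.take k := by
  have h := List.prefix_iff_eq_take.mp huv
  rw [h]
  exact List.take_isPrefix_take.2 (Or.inl hk)

open Classical in
lemma cnt_eq_of_no_W_ext {t : DTree D} {F : ℕ → Set (ℕ → D)} {u v : List D}
    (huv : u <+: v) (hnone : ∀ w, u <+: w → ¬ Wmem t F w) :
    cnt t F v = cnt t F u := by
  unfold cnt
  congr 1
  ext k
  simp only [Finset.mem_filter, Finset.mem_range]
  constructor
  · rintro ⟨hk, hW⟩
    rcases Nat.lt_or_ge k u.length with hk' | hk'
    · exact ⟨hk', by rwa [take_eq_of_prefix huv hk'.le] at hW⟩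
    · exact absurd hW (hnone _ (prefix_take_of_le huv hk'))
  · rintro ⟨hk, hW⟩
    refine ⟨hk.trans_le huv.length_le, ?_⟩
    rwa [take_eq_of_prefix huv hk.le]


lemma Wmem_nodes {t : DTree D} {F : ℕ → Set (ℕ → D)} {v : List D} (h : Wmem t F v) :
    v ∈ t.nodes := ((Wmem_iff t F v).1 h).1

lemma Wmem_dense {t : DTree D} {F : ℕ → Set (ℕ → D)}
    (hF : ∀ n, NowhereDenseT t (F n)) : DenseN t {v | Wmem t F v} := by
  intro u hu
  by_contra hcon
  push_neg at hcon
  have hnone : ∀ w, u <+: w → ¬ Wmem t F w := fun w hw hW => hcon w hW hw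
  obtain ⟨v, hv, huv, hav⟩ := hF (cnt t F u) u hu
  have hWv : Wmem t F v := by
    rw [Wmem_iff]
    refine ⟨hv, ?_⟩
    rwa [cnt_eq_of_no_W_ext huv hnone]
  exact hnone v huv hWv

open Classical in
lemma cnt_listPref (t : DTree D) (F : ℕ → Set (ℕ → D)) (b : ℕ → D) (n : ℕ) :
    cnt t F (listPref b n) =
      ((Finset.range n).filter (fun k => Wmem t F (listPref b k))).card := by
  unfold cnt
  rw [listPref_length]
  congr 1
  apply Finset.filter_congr
  intro k hk
  rw [take_listPref b (Finset.mem_range.1 hk).le]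

open Classical in
lemma exists_prefix_cnt_ge {t : DTree D} {F : ℕ → Set (ℕ → D)} {b : ℕ → D}
    (hinf : {n | Wmem t F (listPref b n)}.Infinite) (i : ℕ) :
    ∃ n, Wmem t F (listPref b n) ∧ i ≤ cnt t F (listPref b n) := by
  induction i with
  | zero =>
    obtain ⟨n, hn⟩ := hinf.nonempty
    exact ⟨n, hn, Nat.zero_le _⟩
  | succ i ih =>
    obtain ⟨n, hn, hcn⟩ := ih
    obtain ⟨m, hm, hnm⟩ := hinf.exists_gt n
    refine ⟨m, hm, ?_⟩
    have hsub : insert n ((Finset.range n).filter (fun k => Wmem t F (listPref b k))) ⊆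
        (Finset.range m).filter (fun k => Wmem t F (listPref b k)) := by
      intro x hx
      rcases Finset.mem_insert.1 hx with rfl | hx
      · exact Finset.mem_filter.2 ⟨Finset.mem_range.2 hnm, hn⟩
      · obtain ⟨hx1, hx2⟩ := Finset.mem_filter.1 hx
        exact Finset.mem_filter.2 ⟨Finset.mem_range.2 ((Finset.mem_range.1 hx1).trans hnm), hx2⟩
    have hcard := Finset.card_le_card hsub
    rw [Finset.card_insert_of_notMem (by simp)] at hcard
    rw [cnt_listPref] at hcn ⊢
    omega

end Stmt5Aux

open Stmt5Aux in
/-- A Borel set `B` of branches of a `D`-tree `t` is large iff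
there exists a dense set of nodes `W ⊆ t` such that every branch with infinitely
many prefixes in `W` belongs to `B`. -/
theorem stmt5 {D : Type} [Countable D] (t : DTree D) (B : Set (ℕ → D))
    (hB : ∀ b ∈ B, IsBranch t b)
    (hBorel : @MeasurableSet _ (@borel _ (branchTopology t))
      {b : {b : ℕ → D // IsBranch t b} | b.1 ∈ B}) :
    LargeT t B ↔ ∃ W ⊆ t.nodes, DenseN t W ∧ BranchesThru t W ⊆ B := by
  constructor
  · rintro ⟨f, hnwd, hcov⟩
    refine ⟨{v | Wmem t (Fcup f) v}, fun v hv => Wmem_nodes hv,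
      Wmem_dense (nwd_Fcup hnwd), ?_⟩
    rintro b ⟨hbr, hinf⟩
    by_contra hb
    obtain ⟨i, hi⟩ := Set.mem_iUnion.1 (hcov ⟨hbr, hb⟩)
    obtain ⟨n, hW, hc⟩ := exists_prefix_cnt_ge hinf i
    have hav := ((Wmem_iff t (Fcup f) (listPref b n)).1 hW).2
    exact hav b (subset_Fcup f hc hi) (by rw [listPref_length])
  · rintro ⟨W, hWsub, hWdense, hWB⟩
    refine ⟨fun m => {b | IsBranch t b ∧ ∀ n, m ≤ n → listPref b n ∉ W}, ?_, ?_⟩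
    · intro m u hu
      obtain ⟨u', hu', huu', hlen⟩ := exists_long_ext t hu m
      obtain ⟨v, hvW, hu'v⟩ := hWdense u' hu'
      refine ⟨v, hWsub hvW, huu'.trans hu'v, ?_⟩
      rintro b ⟨hbbr, hbav⟩ heq
      have hmlen : m ≤ v.length := by
        have := hu'v.length_le; omega
      exact hbav v.length hmlen (by rw [heq]; exact hvW)
    · rintro b ⟨hbr, hbB⟩
      have hfin : {n | listPref b n ∈ W}.Finite := by
        by_contra hinf
        exact hbB (hWB ⟨hbr, hinf⟩)
      obtain ⟨m, hm⟩ := hfin.bddAbove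
      refine Set.mem_iUnion.2 ⟨m + 1, hbr, fun n hn hnW => ?_⟩
      have := hm hnW
      omega
end

section
/- Let t be a D-tree. A set of nodes W ⊆ t is dense if and only if there exists a direction mapping d : t → D that points to W. -/
open Classical in
/-- A minimal-length element of `W` extending `u`, if one exists. -/
noncomputable def stmt6wit {D : Type} (W : Set (List D)) (u : List D) : List D :=
  if h : ∃ n, ∃ v, v ∈ W ∧ u <+: v ∧ v.length = n then
    Classical.choose (Nat.find_spec h)
  else u

lemma stmt6wit_spec {D : Type} {W : Set (List D)} {u : List D}
    (h : ∃ v, v ∈ W ∧ u <+: v) :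
    stmt6wit W u ∈ W ∧ u <+: stmt6wit W u ∧
      ∀ v, v ∈ W → u <+: v → (stmt6wit W u).length ≤ v.length := by
  classical
  obtain ⟨v, hv, hp⟩ := h
  have h' : ∃ n, ∃ v, v ∈ W ∧ u <+: v ∧ v.length = n := ⟨v.length, v, hv, hp, rfl⟩
  have hspec := Classical.choose_spec (Nat.find_spec h')
  rw [stmt6wit, dif_pos h']
  refine ⟨hspec.1, hspec.2.1, fun w hw hpw => ?_⟩
  rw [hspec.2.2]
  exact Nat.find_min' h' ⟨w, hw, hpw, rfl⟩

/-- The direction mapping toward the minimal witness. -/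
noncomputable def stmt6dir {D : Type} (W : Set (List D)) (d0 : D) (u : List D) : D :=
  match (stmt6wit W u).drop u.length with
  | [] => d0
  | a :: _ => a

/-- A set of nodes `W` of a `D`-tree `t` is dense iff there is a
direction mapping `d : t → D` that points to `W`. -/
theorem stmt6 {D : Type} [Countable D] (t : DTree D) (W : Set (List D))
    (hW : W ⊆ t.nodes) :
    DenseN t W ↔ ∃ d : List D → D, PointsTo t d W := by
  classical
  constructor
  · intro hd
    obtain ⟨d0, _⟩ := t.no_leaf [] t.root_mem
    refine ⟨stmt6dir W d0, ?_⟩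
    -- key induction on the slack of the minimal witness
    have key : ∀ n : ℕ, ∀ u, u ∈ t.nodes → (stmt6wit W u).length - u.length ≤ n →
        ∃ l : List D, u ++ l ∈ W ∧
          ∀ i : Fin l.length, l.get i = stmt6dir W d0 (u ++ l.take i.1) := by
      intro n
      induction n with
      | zero =>
        intro u hu hle
        have hex : ∃ v, v ∈ W ∧ u <+: v := hd u hu
        obtain ⟨hmem, hpre, _⟩ := stmt6wit_spec hex
        have hlen : (stmt6wit W u).length ≤ u.length := by omega
        have : stmt6wit W u = u :=
          (hpre.eq_of_length (le_antisymm hpre.length_le hlen)).symm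
        refine ⟨[], by simpa [this] using hmem, fun i => absurd i.2 (by simp)⟩
      | succ n ih =>
        intro u hu hle
        have hex : ∃ v, v ∈ W ∧ u <+: v := hd u hu
        obtain ⟨hmem, hpre, hmin⟩ := stmt6wit_spec hex
        by_cases heq : stmt6wit W u = u
        · refine ⟨[], by simpa [heq] using hmem, fun i => absurd i.2 (by simp)⟩
        · -- strict extension: step one letter toward the witness
          have hlt : u.length < (stmt6wit W u).length := by
            rcases lt_or_eq_of_le hpre.length_le with h | h
            · exact h
            · exact absurd (hpre.eq_of_length h).symm heq
          obtain ⟨r, hr⟩ := hpre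
          have hrne : r ≠ [] := by
            rintro rfl; simp at hr; exact heq hr.symm
          obtain ⟨a, r', rfl⟩ := List.exists_cons_of_ne_nil hrne
          have hdir : stmt6dir W d0 u = a := by
            rw [stmt6dir]
            have : (stmt6wit W u).drop u.length = a :: r' := by
              rw [← hr]; simp
            rw [this]
          set u' := u ++ [a] with hu'
          have hpre' : u' <+: stmt6wit W u := ⟨r', by rw [← hr]; simp [hu']⟩
          have hu'mem : u' ∈ t.nodes := t.prefix_closed hpre' (hW hmem)
          have hmin' : (stmt6wit W u').length ≤ (stmt6wit W u).length :=
            (stmt6wit_spec ⟨stmt6wit W u, hmem, hpre'⟩).2.2 _ hmem hpre'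
          have hslack : (stmt6wit W u').length - u'.length ≤ n := by
            have : u'.length = u.length + 1 := by simp [hu']
            omega
          obtain ⟨l', hl'W, hl'dir⟩ := ih u' hu'mem hslack
          refine ⟨a :: l', by simpa [hu'] using hl'W, ?_⟩
          rintro ⟨i, hi⟩
          cases i with
          | zero => simpa using hdir.symm
          | succ j =>
            have hj : j < l'.length := by simpa using hi
            have := hl'dir ⟨j, hj⟩
            simpa [hu', List.take_succ_cons] using this
    intro u hu
    exact key _ u hu le_rfl
  · rintro ⟨d, hd⟩ u hu
    obtain ⟨l, hl, -⟩ := hd u hu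
    exact ⟨u ++ l, hl, List.prefix_append u l⟩
end

section
/- Let t be a D-tree with a colouring Col : t → C into a finite set C ⊂ ℕ. The set of branches of t satisfying the parity condition is large if and only if there exists a valid local-strategy (φ_f, φ_n) on t such that every (φ_f, φ_n)-compatible branch satisfies the parity condition. Moreover, (φ_f, φ_n) can be chosen so that φ_f(u₁) = φ_f(u₂) and φ_n(u₁) = φ_n(u₂) whenever the coloured subtrees t[u₁] and t[u₂] are equal. -/
/-- The branch `b` satisfies the parity condition: the least colour occurring
infinitely often along its nodes is even. -/
def ParityBranch {D : Type} (col : List D → ℕ) (b : ℕ → D) : Prop :=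
  Even (sInf {c | {n | col (listPref b n) = c}.Infinite})

/-- Following `φ` from `u` leads to `v`: `v` is obtained from `u` by following the
direction components of `φ`, and the flag of `φ` at `v` is `⊤`. -/
def Follows {D : Type} (φ : List D → D × Bool) (u v : List D) : Prop :=
  ∃ l : List D, v = u ++ l ∧ (∀ i : Fin l.length, l.get i = (φ (u ++ l.take i.1)).1) ∧
    (φ v).2 = true

/-- `v` is the shortest node reached from `u` by following `φ` whose flag is `⊤`. -/
def FollowsShortest {D : Type} (φ : List D → D × Bool) (u v : List D) : Prop :=
  ∃ l : List D, v = u ++ l ∧ (∀ i : Fin l.length, l.get i = (φ (u ++ l.take i.1)).1) ∧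
    (φ v).2 = true ∧ ∀ l' : List D, l' <+: l → l' ≠ l → (φ (u ++ l')).2 = false

/-- A valid local-strategy: both maps always point at a child present in the tree
and, from every node, following each of them eventually reaches a `⊤`-flagged
node. -/
def ValidLS {D : Type} (t : DTree D) (φf φn : List D → D × Bool) : Prop :=
  (∀ u ∈ t.nodes, u ++ [(φf u).1] ∈ t.nodes ∧ u ++ [(φn u).1] ∈ t.nodes) ∧
  (∀ u ∈ t.nodes, ∃ v, Follows φf u v) ∧
  (∀ u ∈ t.nodes, ∃ v, Follows φn u v)

/-- A `(φf, φn)`-compatible branch: obtained by repeatedly selecting an arbitrary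
node strictly below the previously reached node and then following `φf` (in the
first round) resp. `φn` (in the later rounds) to the shortest `⊤`-flagged node. -/
def CompatibleBranch {D : Type} (φf φn : List D → D × Bool) (b : ℕ → D) : Prop :=
  ∃ u v : ℕ → List D,
    (∀ n, listPref b (u n).length = u n) ∧ (∀ n, listPref b (v n).length = v n) ∧
    FollowsShortest φf (u 0) (v 0) ∧
    (∀ n, FollowsShortest φn (u (n + 1)) (v (n + 1))) ∧
    (∀ n, v n <+: u (n + 1) ∧ v n ≠ u (n + 1))

/-- The coloured subtrees of `t` rooted at `u₁` and `u₂` are equal. -/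
def SubtreeEq {D : Type} (t : DTree D) (col : List D → ℕ) (u₁ u₂ : List D) : Prop :=
  (∀ w : List D, u₁ ++ w ∈ t.nodes ↔ u₂ ++ w ∈ t.nodes) ∧
  (∀ w : List D, u₁ ++ w ∈ t.nodes → col (u₁ ++ w) = col (u₂ ++ w))

/-- `C(u)`: the set of colours of nodes of `t` reachable from `u`. -/
def ColorsFrom {D : Type} (t : DTree D) (col : List D → ℕ) (u : List D) : Set ℕ :=
  {c | ∃ v ∈ t.nodes, u <+: v ∧ col v = c}

/-- A stable node of `t`: all its descendants have the same set of reachable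
colours as itself. -/
def StableNode {D : Type} (t : DTree D) (col : List D → ℕ) (u : List D) : Prop :=
  u ∈ t.nodes ∧ ∀ w ∈ t.nodes, u <+: w → ColorsFrom t col w = ColorsFrom t col u

/-!
Call a node *stable* if all of its descendants reach the same set of colours, and a *stable-min*
node if moreover its own colour is the least colour it reaches. Since the reachable colour set
shrinks along descendants and is finite, below every node there is a stable node, hence a
stable-min one. Each side of the theorem is equivalent to: every stable node reaches an even least
colour. A branch through a stable node that sees its least colour `c` infinitely often has `c` as
least recurring colour. So if some stable node has an odd least colour, one can build such a branch
that also escapes each of countably many nowhere dense sets, resp. is compatible with any given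
local-strategy. Conversely, the branches through infinitely many stable-min nodes satisfy the parity
condition and form a large set, and the local-strategy "walk towards the nearest stable-min node
and flag ⊤ there" only has such compatible branches; it becomes invariant under equality of coloured
subtrees by making its moves at a canonical representative of each subtree class.
-/

section Branches

variable {D : Type}

theorem length_listPref (b : ℕ → D) (n : ℕ) : (listPref b n).length = n :=
  List.length_ofFn

theorem take_listPref (b : ℕ → D) {m n : ℕ} (h : m ≤ n) :
    (listPref b n).take m = listPref b m := by
  apply List.ext_getElem <;> simp [listPref, h]

theorem listPref_prefix_listPref (b : ℕ → D) {m n : ℕ} (h : m ≤ n) :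
    listPref b m <+: listPref b n := by
  rw [List.prefix_iff_eq_take, length_listPref, take_listPref b h]

theorem listPref_length_of_prefix {b : ℕ → D} {x : List D} {n : ℕ}
    (h : x <+: listPref b n) : listPref b x.length = x := by
  have hlen : x.length ≤ n := length_listPref b n ▸ h.length_le
  rw [← take_listPref b hlen, ← List.prefix_iff_eq_take.mp h]

theorem exists_seq_of_forall_exists {α : Type*} (p : α → Prop) (r : ℕ → α → α → Prop)
    {a₀ : α} (h₀ : p a₀) (h : ∀ n a, p a → ∃ a', p a' ∧ r n a a') :
    ∃ s : ℕ → α, s 0 = a₀ ∧ (∀ n, p (s n)) ∧ ∀ n, r n (s n) (s (n + 1)) := by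
  choose next hnext hr using h
  let s : ℕ → {a // p a} := fun n =>
    Nat.rec ⟨a₀, h₀⟩ (fun n a => ⟨next n a.1 a.2, hnext n a.1 a.2⟩) n
  exact ⟨fun n => (s n).1, rfl, fun n => (s n).2, fun n => hr n (s n).1 (s n).2⟩

theorem prefix_of_chain {v : ℕ → List D} (h : ∀ n, v n <+: v (n + 1)) {m n : ℕ}
    (hmn : m ≤ n) : v m <+: v n := by
  induction n, hmn using Nat.le_induction with
  | base => exact List.prefix_rfl
  | succ n _ ih => exact ih.trans (h n)

end Branches

section Trees

variable {D : Type} {t : DTree D} {col : List D → ℕ}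

theorem exists_branch_of_chain {v : ℕ → List D} (hnode : ∀ n, v n ∈ t.nodes)
    (hchain : ∀ n, v n <+: v (n + 1)) (hlen : ∀ n, (v n).length < (v (n + 1)).length) :
    ∃ b : ℕ → D, IsBranch t b ∧ ∀ n, listPref b (v n).length = v n := by
  obtain ⟨d₀, -⟩ := t.no_leaf [] t.root_mem
  have hlen' : ∀ n, n < (v (n + 1)).length := fun n => by
    induction n with
    | zero => exact (Nat.zero_le _).trans_lt (hlen 0)
    | succ n ih => exact (Nat.succ_le_of_lt ih).trans_lt (hlen (n + 1))
  let b : ℕ → D := fun k => (v (k + 1)).getD k d₀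
  have hb : ∀ n k (hk : k < (v n).length), b k = (v n)[k] := by
    intro n k hk
    rw [show b k = (v (k + 1))[k]'(hlen' k) from List.getD_eq_getElem _ _ (hlen' k)]
    rcases le_total n (k + 1) with h | h
    · exact ((prefix_of_chain hchain h).getElem hk).symm
    · exact (prefix_of_chain hchain h).getElem (hlen' k)
  have hbv : ∀ n, listPref b (v n).length = v n := fun n =>
    List.ext_getElem (length_listPref _ _) fun k _ hk => by simp [listPref, hb n k hk]
  refine ⟨b, fun m => t.prefix_closed ?_ (hnode (m + 1)), hbv⟩
  rw [← hbv (m + 1)]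
  exact listPref_prefix_listPref b (hlen' m).le

theorem exists_extension_length_ge {u : List D} (hu : u ∈ t.nodes) (m : ℕ) :
    ∃ v ∈ t.nodes, u <+: v ∧ m ≤ v.length := by
  induction m with
  | zero => exact ⟨u, hu, List.prefix_rfl, Nat.zero_le _⟩
  | succ m ih =>
    obtain ⟨v, hv, huv, hm⟩ := ih
    obtain ⟨d, hd⟩ := t.no_leaf v hv
    exact ⟨v ++ [d], hd, huv.trans (List.prefix_append _ _), by simp; omega⟩

theorem colorsFrom_nonempty {u : List D} (hu : u ∈ t.nodes) : (ColorsFrom t col u).Nonempty :=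
  ⟨col u, u, hu, List.prefix_rfl, rfl⟩

theorem colorsFrom_anti {u w : List D} (h : u <+: w) : ColorsFrom t col w ⊆ ColorsFrom t col u :=
  fun _ ⟨v, hv, hwv, hc⟩ => ⟨v, hv, h.trans hwv, hc⟩

theorem StableNode.of_prefix {u w : List D} (hst : StableNode t col u) (hw : w ∈ t.nodes)
    (huw : u <+: w) : StableNode t col w :=
  ⟨hw, fun z hz hwz => (hst.2 z hz (huw.trans hwz)).trans (hst.2 w hw huw).symm⟩

theorem exists_stableNode (hcol : (col '' t.nodes).Finite) {u : List D} (hu : u ∈ t.nodes) :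
    ∃ v ∈ t.nodes, u <+: v ∧ StableNode t col v := by
  obtain ⟨v, ⟨hv, huv⟩, hmin⟩ :=
    (measure fun v => (ColorsFrom t col v).ncard).wf.has_min {v | v ∈ t.nodes ∧ u <+: v}
      ⟨u, hu, List.prefix_rfl⟩
  refine ⟨v, hv, huv, hv, fun w hw hvw => ?_⟩
  have hfin : (ColorsFrom t col v).Finite := hcol.subset fun _ ⟨x, hx, _, hc⟩ => ⟨x, hx, hc⟩
  exact Set.eq_of_subset_of_ncard_le (colorsFrom_anti hvw)
    (not_lt.mp (hmin w ⟨hw, huv.trans hvw⟩)) hfin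

theorem parityBranch_iff_even_sInf_colorsFrom {b : ℕ → D} {u : List D} (hb : IsBranch t b)
    (hbu : listPref b u.length = u)
    (hinf : {n | col (listPref b n) = sInf (ColorsFrom t col u)}.Infinite) :
    ParityBranch col b ↔ Even (sInf (ColorsFrom t col u)) := by
  suffices h : sInf {c | {n | col (listPref b n) = c}.Infinite} = sInf (ColorsFrom t col u) by
    rw [ParityBranch, h]
  refine le_antisymm (Nat.sInf_le hinf) (le_csInf ⟨_, hinf⟩ fun c hc => ?_)
  -- a colour recurring along `b` recurs below `u`, so it is reachable from `u`
  obtain ⟨n, hn, hun⟩ := hc.exists_gt u.length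
  exact Nat.sInf_le ⟨listPref b n, hb n, hbu ▸ listPref_prefix_listPref b hun.le, hn⟩

/-- The branch interleaves the prescribed moves `w n ↦ a n` with visits to the least colour
reachable from `u`, which pins down its parity. -/
theorem StableNode.exists_branch_visiting {u : List D} (hst : StableNode t col u)
    (P : ℕ → List D → List D → Prop)
    (hP : ∀ n w, w ∈ t.nodes → ∃ a ∈ t.nodes, w <+: a ∧ P n w a) :
    ∃ b : ℕ → D, ∃ w a : ℕ → List D, IsBranch t b ∧
      (∀ n, listPref b (w n).length = w n) ∧ (∀ n, listPref b (a n).length = a n) ∧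
      (∀ n, P n (w n) (a n) ∧ a n <+: w (n + 1) ∧ a n ≠ w (n + 1)) ∧
      (ParityBranch col b ↔ Even (sInf (ColorsFrom t col u))) := by
  set c := sInf (ColorsFrom t col u)
  have hc : c ∈ ColorsFrom t col u := Nat.sInf_mem (colorsFrom_nonempty hst.1)
  have hstep : ∀ n w, (w ∈ t.nodes ∧ u <+: w) → ∃ w', (w' ∈ t.nodes ∧ u <+: w') ∧
      ∃ a, P n w a ∧ w <+: a ∧ a <+: w' ∧ a.length < w'.length ∧ col w' = c := by
    rintro n w ⟨hw, huw⟩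
    obtain ⟨a, ha, hwa, hPa⟩ := hP n w hw
    obtain ⟨d, hd⟩ := t.no_leaf a ha
    have hud : u <+: a ++ [d] := (huw.trans hwa).trans (List.prefix_append _ _)
    obtain ⟨w', hw', hdw', hcw'⟩ : c ∈ ColorsFrom t col (a ++ [d]) := hst.2 _ hd hud ▸ hc
    refine ⟨w', ⟨hw', hud.trans hdw'⟩, a, hPa, hwa, (List.prefix_append _ _).trans hdw', ?_, hcw'⟩
    simpa using hdw'.length_le
  obtain ⟨w, hw0, hw, hstep⟩ := exists_seq_of_forall_exists _ _ ⟨hst.1, List.prefix_rfl⟩ hstep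
  choose a hPa hwa haw hlt hcw using hstep
  have hlen : ∀ n, (w n).length < (w (n + 1)).length := fun n =>
    (hwa n).length_le.trans_lt (hlt n)
  obtain ⟨b, hb, hbw⟩ := exists_branch_of_chain (fun n => (hw n).1)
    (fun n => (hwa n).trans (haw n)) hlen
  have hba : ∀ n, listPref b (a n).length = a n := fun n =>
    listPref_length_of_prefix ((hbw (n + 1)).symm ▸ haw n)
  refine ⟨b, w, a, hb, hbw, hba, fun n => ⟨hPa n, haw n, fun h => (hlt n).ne (h ▸ rfl)⟩, ?_⟩
  refine parityBranch_iff_even_sInf_colorsFrom hb (hw0 ▸ hbw 0) <|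
    Set.infinite_of_injective_forall_mem (f := fun n => (w (n + 1)).length)
      (strictMono_nat_of_lt_succ fun n => hlen (n + 1)).injective fun n => ?_
  show col (listPref b (w (n + 1)).length) = c
  rw [hbw, hcw]

def StableMinNode (t : DTree D) (col : List D → ℕ) (u : List D) : Prop :=
  StableNode t col u ∧ col u = sInf (ColorsFrom t col u)

theorem exists_stableMinNode (hcol : (col '' t.nodes).Finite) {u : List D} (hu : u ∈ t.nodes) :
    ∃ v ∈ t.nodes, u <+: v ∧ StableMinNode t col v := by
  obtain ⟨s, hs, hus, hst⟩ := exists_stableNode hcol hu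
  obtain ⟨v, hv, hsv, hcv⟩ := Nat.sInf_mem (colorsFrom_nonempty (col := col) hs)
  exact ⟨v, hv, hus.trans hsv, StableNode.of_prefix hst hv hsv, by rw [hst.2 v hv hsv, hcv]⟩

def EvenStableMin (t : DTree D) (col : List D → ℕ) : Prop :=
  ∀ u, StableNode t col u → Even (sInf (ColorsFrom t col u))

theorem parityBranch_of_infinite_stableMinNode (hE : EvenStableMin t col) {b : ℕ → D}
    (hb : IsBranch t b) (hinf : {n | StableMinNode t col (listPref b n)}.Infinite) :
    ParityBranch col b := by
  obtain ⟨n₀, hn₀⟩ := hinf.nonempty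
  have hst := hn₀.1
  have hbu : listPref b (listPref b n₀).length = listPref b n₀ := by rw [length_listPref]
  refine (parityBranch_iff_even_sInf_colorsFrom hb hbu ?_).2 (hE _ hst)
  -- beyond `n₀` the stable-min nodes of `b` all carry the least colour reachable from `n₀`
  refine (hinf.sdiff (Set.finite_Iio n₀)).mono fun n hn => ?_
  have hpre := listPref_prefix_listPref b (not_lt.mp hn.2)
  show col (listPref b n) = _
  rw [hn.1.2, hst.2 _ (hb n) hpre]

theorem large_of_evenStableMin (hcol : (col '' t.nodes).Finite) (hE : EvenStableMin t col) :
    LargeT t {b | IsBranch t b ∧ ParityBranch col b} := by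
  refine ⟨fun k => {b | ∀ n ≥ k, ¬ StableMinNode t col (listPref b n)}, fun k u hu => ?_, ?_⟩
  · obtain ⟨u', hu', huu', hk⟩ := exists_extension_length_ge hu k
    obtain ⟨v, hv, hu'v, hmin⟩ := exists_stableMinNode hcol hu'
    exact ⟨v, hv, huu'.trans hu'v, fun b hb hbv =>
      hb v.length (hk.trans hu'v.length_le) (by rwa [hbv])⟩
  · rintro b ⟨hb, hpar⟩
    by_contra hcover
    refine hpar ⟨hb, parityBranch_of_infinite_stableMinNode hE hb <|
      Nat.frequently_atTop_iff_infinite.mp (Filter.frequently_atTop.mpr fun k => ?_)⟩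
    by_contra! hk
    exact hcover (Set.mem_iUnion.mpr ⟨k, hk⟩)

theorem evenStableMin_of_large (hL : LargeT t {b | IsBranch t b ∧ ParityBranch col b}) :
    EvenStableMin t col := by
  intro u hst
  obtain ⟨f, hf, hcover⟩ := hL
  obtain ⟨b, _, _, hb, -, hba, havoid, hpar⟩ :=
    hst.exists_branch_visiting (fun n _ a => ∀ b ∈ f n, listPref b a.length ≠ a) hf
  by_contra hodd
  obtain ⟨_, ⟨n, rfl⟩, hbn⟩ := hcover ⟨hb, fun h => hodd (hpar.1 h.2)⟩
  exact (havoid n).1 b hbn (hba n)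

end Trees

section Follows

variable {D : Type} {φ : List D → D × Bool}

theorem path_cons_iff {u : List D} {d : D} {l : List D} :
    (∀ i : Fin (d :: l).length, (d :: l).get i = (φ (u ++ (d :: l).take i.1)).1) ↔
      d = (φ u).1 ∧ ∀ i : Fin l.length, l.get i = (φ (u ++ [d] ++ l.take i.1)).1 := by
  simp [Fin.forall_fin_succ]

theorem follows_self {u : List D} (h : (φ u).2 = true) : Follows φ u u :=
  ⟨[], by simp, fun i => i.elim0, h⟩

theorem follows_of_follows_append {u v : List D} (h : Follows φ (u ++ [(φ u).1]) v) :
    Follows φ u v := by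
  obtain ⟨l, rfl, hl, hv⟩ := h
  exact ⟨(φ u).1 :: l, by simp, path_cons_iff.2 ⟨rfl, hl⟩, hv⟩

theorem FollowsShortest.prefix {u v : List D} (h : FollowsShortest φ u v) : u <+: v := by
  obtain ⟨l, rfl, -⟩ := h
  exact List.prefix_append u l

theorem exists_followsShortest {u v : List D} (h : Follows φ u v) : ∃ w, FollowsShortest φ u w := by
  obtain ⟨l, rfl, hl, hv⟩ := h
  induction l generalizing u with
  | nil => exact ⟨u, [], by simp, fun i => i.elim0, by simpa using hv, fun l' h hne =>
      (hne (List.prefix_nil.mp h)).elim⟩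
  | cons d l ih =>
    by_cases hu : (φ u).2 = true
    · exact ⟨u, [], by simp, fun i => i.elim0, hu, fun l' h hne =>
        (hne (List.prefix_nil.mp h)).elim⟩
    obtain ⟨rfl, hl⟩ := path_cons_iff.1 hl
    obtain ⟨w, l', rfl, hl', hw, hmin⟩ := ih hl (by simpa using hv)
    refine ⟨_, (φ u).1 :: l', by simp, path_cons_iff.2 ⟨rfl, hl'⟩, hw, ?_⟩
    rintro (_ | ⟨e, l''⟩) hpre hne
    · simpa using hu
    · obtain ⟨rfl, hpre'⟩ := List.cons_prefix_cons.1 hpre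
      simpa using hmin l'' hpre' (by simpa using hne)

theorem append_mem_of_path {t : DTree D}
    (hchild : ∀ u ∈ t.nodes, u ++ [(φ u).1] ∈ t.nodes) {u : List D} (hu : u ∈ t.nodes)
    {l : List D} (hl : ∀ i : Fin l.length, l.get i = (φ (u ++ l.take i.1)).1) :
    u ++ l ∈ t.nodes := by
  induction l generalizing u with
  | nil => simpa using hu
  | cons d l ih =>
    obtain ⟨rfl, hl⟩ := path_cons_iff.1 hl
    simpa using ih (hchild u hu) hl

theorem exists_followsShortest_mem {t : DTree D}
    (hchild : ∀ u ∈ t.nodes, u ++ [(φ u).1] ∈ t.nodes) (hfol : ∀ u ∈ t.nodes, ∃ v, Follows φ u v)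
    {w : List D} (hw : w ∈ t.nodes) : ∃ a ∈ t.nodes, w <+: a ∧ FollowsShortest φ w a := by
  obtain ⟨a, ha⟩ := exists_followsShortest (hfol w hw).choose_spec
  obtain ⟨l, rfl, hl, -⟩ := id ha
  exact ⟨_, append_mem_of_path hchild hw hl, ha.prefix, ha⟩

end Follows

section Strategies

variable {D : Type} {t : DTree D} {col : List D → ℕ}

theorem evenStableMin_of_strategy {φf φn : List D → D × Bool} (hv : ValidLS t φf φn)
    (hpar : ∀ b, IsBranch t b → CompatibleBranch φf φn b → ParityBranch col b) :
    EvenStableMin t col := by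
  intro u hst
  let ψ : ℕ → List D → D × Bool := fun n => n.casesOn φf fun _ => φn
  have hψ : ∀ n w, w ∈ t.nodes → ∃ a ∈ t.nodes, w <+: a ∧ FollowsShortest (ψ n) w a := by
    rintro (_ | n) w hw
    exacts [exists_followsShortest_mem (fun u hu => (hv.1 u hu).1) hv.2.1 hw,
      exists_followsShortest_mem (fun u hu => (hv.1 u hu).2) hv.2.2 hw]
  obtain ⟨b, w, a, hb, hbw, hba, hstep, hbpar⟩ := hst.exists_branch_visiting _ hψ
  exact hbpar.1 (hpar b hb
    ⟨w, a, hbw, hba, (hstep 0).1, fun n => (hstep (n + 1)).1, fun n => (hstep n).2⟩)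

end Strategies

section SubtreeEq

variable {D : Type} {t : DTree D} {col : List D → ℕ}

theorem SubtreeEq.symm {u₁ u₂ : List D} (h : SubtreeEq t col u₁ u₂) : SubtreeEq t col u₂ u₁ :=
  ⟨fun w => (h.1 w).symm, fun w hw => (h.2 w ((h.1 w).2 hw)).symm⟩

theorem SubtreeEq.trans {u₁ u₂ u₃ : List D} (h₁₂ : SubtreeEq t col u₁ u₂)
    (h₂₃ : SubtreeEq t col u₂ u₃) : SubtreeEq t col u₁ u₃ :=
  ⟨fun w => (h₁₂.1 w).trans (h₂₃.1 w),
    fun w hw => (h₁₂.2 w hw).trans (h₂₃.2 w ((h₁₂.1 w).1 hw))⟩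

def subtreeSetoid (t : DTree D) (col : List D → ℕ) : Setoid (List D) where
  r := SubtreeEq t col
  iseqv := ⟨fun _ => ⟨fun _ => Iff.rfl, fun _ _ => rfl⟩, SubtreeEq.symm, SubtreeEq.trans⟩

theorem SubtreeEq.append {u₁ u₂ : List D} (h : SubtreeEq t col u₁ u₂) (x : List D) :
    SubtreeEq t col (u₁ ++ x) (u₂ ++ x) :=
  ⟨fun w => by simpa only [List.append_assoc] using h.1 (x ++ w), fun w hw => by
    simpa only [List.append_assoc] using h.2 (x ++ w) (by simpa only [List.append_assoc] using hw)⟩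

theorem SubtreeEq.mem_nodes {u₁ u₂ : List D} (h : SubtreeEq t col u₁ u₂) (hu : u₁ ∈ t.nodes) :
    u₂ ∈ t.nodes := by
  simpa using (h.1 []).1 (by simpa using hu)

theorem SubtreeEq.colorsFrom_subset {u₁ u₂ : List D} (h : SubtreeEq t col u₁ u₂) :
    ColorsFrom t col u₁ ⊆ ColorsFrom t col u₂ := by
  rintro c ⟨v, hv, ⟨x, rfl⟩, rfl⟩
  exact ⟨u₂ ++ x, (h.1 x).1 hv, List.prefix_append _ _, (h.2 x hv).symm⟩

theorem SubtreeEq.colorsFrom_eq {u₁ u₂ : List D} (h : SubtreeEq t col u₁ u₂) :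
    ColorsFrom t col u₁ = ColorsFrom t col u₂ :=
  h.colorsFrom_subset.antisymm h.symm.colorsFrom_subset

theorem SubtreeEq.stableMinNode {u₁ u₂ : List D} (h : SubtreeEq t col u₁ u₂)
    (hmin : StableMinNode t col u₁) : StableMinNode t col u₂ := by
  obtain ⟨⟨hu, hst⟩, hcolor⟩ := hmin
  refine ⟨⟨h.mem_nodes hu, ?_⟩, ?_⟩
  · rintro _ hw ⟨x, rfl⟩
    rw [← (h.append x).colorsFrom_eq, ← h.colorsFrom_eq]
    exact hst _ ((h.1 x).2 hw) (List.prefix_append _ _)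
  · rw [← h.colorsFrom_eq, ← hcolor]
    simpa using (h.2 [] (by simpa using hu)).symm

theorem SubtreeEq.stableMinNode_iff {u₁ u₂ : List D} (h : SubtreeEq t col u₁ u₂) :
    StableMinNode t col u₁ ↔ StableMinNode t col u₂ :=
  ⟨h.stableMinNode, h.symm.stableMinNode⟩

noncomputable def distToStableMin (t : DTree D) (col : List D → ℕ) (u : List D) : ℕ :=
  sInf {n | ∃ x : List D, x.length = n ∧ StableMinNode t col (u ++ x)}

theorem SubtreeEq.distToStableMin_eq {u₁ u₂ : List D} (h : SubtreeEq t col u₁ u₂) :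
    distToStableMin t col u₁ = distToStableMin t col u₂ := by
  simp only [distToStableMin, (h.append _).stableMinNode_iff]

theorem distToStableMin_le {u x : List D} (hx : StableMinNode t col (u ++ x)) :
    distToStableMin t col u ≤ x.length :=
  Nat.sInf_le ⟨x, rfl, hx⟩

theorem exists_stableMinNode_at_distToStableMin (hcol : (col '' t.nodes).Finite) {u : List D}
    (hu : u ∈ t.nodes) :
    ∃ x : List D, x.length = distToStableMin t col u ∧ StableMinNode t col (u ++ x) := by
  obtain ⟨_, -, ⟨x, rfl⟩, hx⟩ := exists_stableMinNode hcol hu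
  have hne : {n | ∃ x : List D, x.length = n ∧ StableMinNode t col (u ++ x)}.Nonempty :=
    ⟨x.length, x, rfl, hx⟩
  exact Nat.sInf_mem hne

def IsStepToStableMin (t : DTree D) (col : List D → ℕ) (u : List D) (d : D) : Prop :=
  u ++ [d] ∈ t.nodes ∧
    (¬ StableMinNode t col u → distToStableMin t col (u ++ [d]) < distToStableMin t col u)

theorem exists_isStepToStableMin (hcol : (col '' t.nodes).Finite) {u : List D}
    (hu : u ∈ t.nodes) : ∃ d, IsStepToStableMin t col u d := by
  by_cases hmin : StableMinNode t col u
  · obtain ⟨d, hd⟩ := t.no_leaf u hu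
    exact ⟨d, hd, absurd hmin⟩
  obtain ⟨_ | ⟨d, x⟩, hx, hxmin⟩ := exists_stableMinNode_at_distToStableMin hcol hu
  · exact absurd (by simpa using hxmin) hmin
  refine ⟨d, t.prefix_closed ?_ hxmin.1.1, fun _ => ?_⟩
  · simp
  · rw [← hx]
    exact (distToStableMin_le (by simpa using hxmin)).trans_lt (by simp)

theorem SubtreeEq.isStepToStableMin {u₁ u₂ : List D} {d : D} (h : SubtreeEq t col u₁ u₂)
    (hd : IsStepToStableMin t col u₁ d) : IsStepToStableMin t col u₂ d :=
  ⟨(h.1 [d]).1 hd.1, fun hmin => by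
    simpa only [(h.append [d]).distToStableMin_eq, h.distToStableMin_eq] using
      hd.2 fun h' => hmin (h.stableMinNode h')⟩

end SubtreeEq

section CanonicalStrategy

variable {D : Type} {t : DTree D} {col : List D → ℕ} [Nonempty D]

open Classical in
noncomputable def canonicalStrategy (t : DTree D) (col : List D → ℕ)
    (u : List D) : D × Bool :=
  let r := (Quotient.mk (subtreeSetoid t col) u).out
  (Classical.epsilon (IsStepToStableMin t col r), decide (StableMinNode t col r))

theorem canonicalStrategy_eq_of_subtreeEq {u₁ u₂ : List D} (h : SubtreeEq t col u₁ u₂) :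
    canonicalStrategy t col u₁ = canonicalStrategy t col u₂ := by
  rw [canonicalStrategy, canonicalStrategy, Quotient.sound (s := subtreeSetoid t col) h]

theorem canonicalStrategy_fst (hcol : (col '' t.nodes).Finite) {u : List D}
    (hu : u ∈ t.nodes) : IsStepToStableMin t col u (canonicalStrategy t col u).1 := by
  have h : SubtreeEq t col _ u := Quotient.mk_out (s := subtreeSetoid t col) u
  exact h.isStepToStableMin
    (Classical.epsilon_spec (exists_isStepToStableMin hcol (h.symm.mem_nodes hu)))

theorem canonicalStrategy_snd {u : List D} :
    (canonicalStrategy t col u).2 = true ↔ StableMinNode t col u := by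
  have h : SubtreeEq t col _ u := Quotient.mk_out (s := subtreeSetoid t col) u
  simpa only [canonicalStrategy, decide_eq_true_iff] using h.stableMinNode_iff

theorem follows_canonicalStrategy (hcol : (col '' t.nodes).Finite) {u : List D}
    (hu : u ∈ t.nodes) : ∃ v, Follows (canonicalStrategy t col) u v := by
  induction hn : distToStableMin t col u using Nat.strong_induction_on generalizing u with
  | _ n ih =>
    by_cases hmin : StableMinNode t col u
    · exact ⟨u, follows_self (canonicalStrategy_snd.2 hmin)⟩
    obtain ⟨hchild, hlt⟩ := canonicalStrategy_fst hcol hu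
    obtain ⟨v, hv⟩ := ih _ (hn ▸ hlt hmin) hchild rfl
    exact ⟨v, follows_of_follows_append hv⟩

theorem validLS_canonicalStrategy (hcol : (col '' t.nodes).Finite) :
    ValidLS t (canonicalStrategy t col) (canonicalStrategy t col) :=
  ⟨fun _ hu => ⟨(canonicalStrategy_fst hcol hu).1, (canonicalStrategy_fst hcol hu).1⟩,
    fun _ => follows_canonicalStrategy hcol, fun _ => follows_canonicalStrategy hcol⟩

theorem parityBranch_of_compatibleBranch_canonicalStrategy (hE : EvenStableMin t col)
    {b : ℕ → D} (hb : IsBranch t b)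
    (hc : CompatibleBranch (canonicalStrategy t col) (canonicalStrategy t col) b) :
    ParityBranch col b := by
  obtain ⟨u, v, -, hv, h0, hn, hlt⟩ := hc
  have hfs : ∀ n, FollowsShortest (canonicalStrategy t col) (u n) (v n) := by
    rintro (_ | n)
    exacts [h0, hn n]
  have hlen : ∀ n, (v n).length < (v (n + 1)).length := fun n =>
    ((hlt n).1.length_le.lt_of_ne fun h => (hlt n).2 ((hlt n).1.eq_of_length h)).trans_le
      (hfs (n + 1)).prefix.length_le
  refine parityBranch_of_infinite_stableMinNode hE hb <| Set.infinite_of_injective_forall_mem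
    (strictMono_nat_of_lt_succ hlen).injective fun n => ?_
  obtain ⟨_, -, -, hflag, -⟩ := hfs n
  show StableMinNode t col (listPref b (v n).length)
  rw [hv n]
  exact canonicalStrategy_snd.1 hflag

end CanonicalStrategy

theorem exists_invariant_strategy_of_evenStableMin {D : Type} {t : DTree D} {col : List D → ℕ}
    (hcol : (col '' t.nodes).Finite) (hE : EvenStableMin t col) :
    ∃ φ : List D → D × Bool, ValidLS t φ φ ∧
      (∀ b, IsBranch t b → CompatibleBranch φ φ b → ParityBranch col b) ∧
      ∀ u₁ u₂, SubtreeEq t col u₁ u₂ → φ u₁ = φ u₂ := by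
  obtain ⟨d, -⟩ := t.no_leaf [] t.root_mem
  have : Nonempty D := ⟨d⟩
  exact ⟨canonicalStrategy t col, validLS_canonicalStrategy hcol,
    fun _ => parityBranch_of_compatibleBranch_canonicalStrategy hE,
    fun _ _ => canonicalStrategy_eq_of_subtreeEq⟩

theorem stmt12_general {D : Type} (t : DTree D) (col : List D → ℕ)
    (hcol : (col '' t.nodes).Finite) :
    (LargeT t {b | IsBranch t b ∧ ParityBranch col b} ↔
      ∃ φf φn : List D → D × Bool, ValidLS t φf φn ∧
        ∀ b, IsBranch t b → CompatibleBranch φf φn b → ParityBranch col b) ∧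
    (LargeT t {b | IsBranch t b ∧ ParityBranch col b} →
      ∃ φf φn : List D → D × Bool, ValidLS t φf φn ∧
        (∀ b, IsBranch t b → CompatibleBranch φf φn b → ParityBranch col b) ∧
        ∀ u₁ ∈ t.nodes, ∀ u₂ ∈ t.nodes, SubtreeEq t col u₁ u₂ →
          φf u₁ = φf u₂ ∧ φn u₁ = φn u₂) := by
  have hlarge : LargeT t {b | IsBranch t b ∧ ParityBranch col b} ↔ EvenStableMin t col :=
    ⟨evenStableMin_of_large, large_of_evenStableMin hcol⟩
  refine ⟨⟨fun hL => ?_, fun ⟨_, _, hv, hpar⟩ => hlarge.2 (evenStableMin_of_strategy hv hpar)⟩,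
    fun hL => ?_⟩ <;>
  obtain ⟨φ, hv, hpar, hinv⟩ := exists_invariant_strategy_of_evenStableMin hcol (hlarge.1 hL)
  exacts [⟨φ, φ, hv, hpar⟩, ⟨φ, φ, hv, hpar, fun u₁ _ u₂ _ h => ⟨hinv u₁ u₂ h, hinv u₁ u₂ h⟩⟩]

/-- The set of branches of a coloured `D`-tree satisfying the
parity condition is large iff there is a valid local-strategy `(φ_f, φ_n)` all of
whose compatible branches satisfy the parity condition; moreover the
local-strategy can be chosen invariant under equality of coloured subtrees. -/
theorem stmt12 {D : Type} [Countable D] (t : DTree D) (col : List D → ℕ)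
    (hcol : (col '' t.nodes).Finite) :
    (LargeT t {b | IsBranch t b ∧ ParityBranch col b} ↔
      ∃ φf φn : List D → D × Bool, ValidLS t φf φn ∧
        ∀ b, IsBranch t b → CompatibleBranch φf φn b → ParityBranch col b) ∧
    (LargeT t {b | IsBranch t b ∧ ParityBranch col b} →
      ∃ φf φn : List D → D × Bool, ValidLS t φf φn ∧
        (∀ b, IsBranch t b → CompatibleBranch φf φn b → ParityBranch col b) ∧
        ∀ u₁ ∈ t.nodes, ∀ u₂ ∈ t.nodes, SubtreeEq t col u₁ u₂ →
          φf u₁ = φf u₂ ∧ φn u₁ = φn u₂) :=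
  stmt12_general t col hcol
end

section
/- Let t be a D-tree with a colouring Col : t → C into a finite set C ⊂ ℕ. If the set of branches of t satisfying the parity condition is large, then for every stable node u of t, min C(u) is even. -/
lemma stmt14_listPref_length {D : Type} (b : ℕ → D) (n : ℕ) : (listPref b n).length = n := by
  simp [listPref]

lemma stmt14_listPref_getElem {D : Type} (b : ℕ → D) {n k : ℕ} (h : k < (listPref b n).length) :
    (listPref b n)[k] = b k := by
  simp [listPref]

lemma stmt14_listPref_prefix {D : Type} (b : ℕ → D) {n N : ℕ} (h : n ≤ N) :
    listPref b n <+: listPref b N := by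
  have : listPref b n = (listPref b N).take n := by
    apply List.ext_getElem
    · simp [stmt14_listPref_length, h]
    · intro k h1 h2
      rw [List.getElem_take, stmt14_listPref_getElem, stmt14_listPref_getElem]
  rw [this]
  exact List.take_prefix _ _

/-- If the set of branches of a coloured `D`-tree satisfying the
parity condition is large, then for every stable node `u` the least colour
reachable from `u` is even. -/
theorem stmt14 {D : Type} [Countable D] (t : DTree D) (col : List D → ℕ)
    (hcol : (col '' t.nodes).Finite)
    (hlarge : LargeT t {b | IsBranch t b ∧ ParityBranch col b}) :
    ∀ u, StableNode t col u → Even (sInf (ColorsFrom t col u)) := by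
  classical
  intro u hu
  obtain ⟨hu_mem, hstab⟩ := hu
  set c := sInf (ColorsFrom t col u) with hc_def
  have hCne : (ColorsFrom t col u).Nonempty := ⟨col u, u, hu_mem, List.prefix_refl u, rfl⟩
  have hc_mem : c ∈ ColorsFrom t col u := Nat.sInf_mem hCne
  obtain ⟨f, hnwd, hsub⟩ := hlarge
  obtain ⟨d0, _⟩ := t.no_leaf [] t.root_mem
  -- the key step: from any node below u, we can extend to pass a node of colour c,
  -- then a node killing f n, then one more step
  have key : ∀ n : ℕ, ∀ v : List D, (v ∈ t.nodes ∧ u <+: v) →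
      ∃ v', (v' ∈ t.nodes ∧ u <+: v') ∧ v <+: v' ∧ v.length < v'.length ∧
        (∃ x, v <+: x ∧ x <+: v' ∧ col x = c) ∧
        (∃ y, y <+: v' ∧ ∀ b' ∈ f n, listPref b' y.length ≠ y) := by
    intro n v hv
    obtain ⟨hv_mem, huv⟩ := hv
    have hcv : c ∈ ColorsFrom t col v := by
      rw [hstab v hv_mem huv]; exact hc_mem
    obtain ⟨x, hx_mem, hvx, hxc⟩ := hcv
    obtain ⟨y, hy_mem, hxy, hy⟩ := hnwd n x hx_mem
    obtain ⟨d, hd⟩ := t.no_leaf y hy_mem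
    refine ⟨y ++ [d], ⟨hd, huv.trans (hvx.trans (hxy.trans ⟨[d], rfl⟩))⟩,
      hvx.trans (hxy.trans ⟨[d], rfl⟩), ?_, ⟨x, hvx, hxy.trans ⟨[d], rfl⟩, hxc⟩,
      ⟨y, ⟨[d], rfl⟩, hy⟩⟩
    have h1 : v.length ≤ x.length := hvx.length_le
    have h2 : x.length ≤ y.length := hxy.length_le
    simp only [List.length_append, List.length_cons, List.length_nil]
    omega
  choose g hg using key
  -- the recursively defined sequence of nodes
  let w : ℕ → List D := fun n => Nat.rec (motive := fun _ => List D) u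
    (fun n v => @dite _ (v ∈ t.nodes ∧ u <+: v) (Classical.dec _) (g n v) (fun _ => v)) n
  have hw0 : w 0 = u := rfl
  have hP : ∀ n, w n ∈ t.nodes ∧ u <+: w n := by
    intro n
    induction n with
    | zero => exact ⟨hu_mem, List.prefix_refl u⟩
    | succ n ih =>
      have : w (n + 1) = g n (w n) ih := by
        show (@dite _ (w n ∈ t.nodes ∧ u <+: w n) (Classical.dec _) (g n (w n)) (fun _ => w n)) = _
        rw [dif_pos ih]
      rw [this]
      exact (hg n (w n) ih).1
  have hstep : ∀ n, w (n + 1) = g n (w n) (hP n) := by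
    intro n
    show (@dite _ (w n ∈ t.nodes ∧ u <+: w n) (Classical.dec _) (g n (w n)) (fun _ => w n)) = _
    rw [dif_pos (hP n)]
  have hsucc : ∀ n, w n <+: w (n + 1) ∧ (w n).length < (w (n + 1)).length := by
    intro n
    rw [hstep n]
    exact ⟨(hg n (w n) (hP n)).2.1, (hg n (w n) (hP n)).2.2.1⟩
  have hchain : ∀ n m, n ≤ m → w n <+: w m := by
    intro n m h
    induction m with
    | zero => simp_all
    | succ m ih =>
      rcases Nat.lt_or_ge n (m + 1) with h' | h'
      · exact (ih (Nat.lt_succ_iff.mp h')).trans (hsucc m).1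
      · have : n = m + 1 := le_antisymm h h'
        rw [this]
  have hlen : ∀ n, n ≤ (w n).length := by
    intro n
    induction n with
    | zero => exact Nat.zero_le _
    | succ n ih => have := (hsucc n).2; omega
  -- the diagonal branch
  let b : ℕ → D := fun k => (w (k + 1)).getD k d0
  have hb_get : ∀ m k, (hk : k < (w m).length) → (w m)[k] = b k := by
    intro m k hk
    have hk' : k < (w (k + 1)).length := lt_of_lt_of_le (Nat.lt_succ_self k) (hlen (k + 1))
    show (w m)[k] = (w (k + 1)).getD k d0
    rw [List.getD_eq_getElem _ _ hk']
    rcases Nat.le_total m (k + 1) with h | h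
    · exact (hchain m (k + 1) h).getElem hk
    · exact ((hchain (k + 1) m h).getElem hk').symm
  have hpref : ∀ v m, v <+: w m → listPref b v.length = v := by
    intro v m hvm
    apply List.ext_getElem
    · simp [stmt14_listPref_length]
    · intro k h1 h2
      rw [stmt14_listPref_getElem]
      have hk : k < (w m).length := lt_of_lt_of_le h2 hvm.length_le
      rw [← hb_get m k hk]
      exact (hvm.getElem h2).symm
  have hbranch : IsBranch t b := by
    intro n
    have h1 : listPref b n <+: listPref b (w n).length :=
      stmt14_listPref_prefix b (hlen n)
    rw [hpref (w n) n (List.prefix_refl _)] at h1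
    exact t.prefix_closed h1 (hP n).1
  have hnotin : ∀ n, b ∉ f n := by
    intro n hbn
    obtain ⟨y, hy_pref, hy⟩ := (hg n (w n) (hP n)).2.2.2.2
    rw [← hstep n] at hy_pref
    exact hy b hbn (hpref y (n + 1) hy_pref)
  have hu_pref : listPref b u.length = u := hpref u 0 (List.prefix_refl u)
  -- b satisfies the parity condition
  have hparity : ParityBranch col b := by
    by_contra hpar
    have : b ∈ {b | IsBranch t b} \ {b | IsBranch t b ∧ ParityBranch col b} :=
      ⟨hbranch, fun h => hpar h.2⟩
    obtain ⟨n, hbn⟩ := Set.mem_iUnion.mp (hsub this)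
    exact hnotin n hbn
  -- the set of colours occurring infinitely often on b has infimum c
  set S := {c' | {n | col (listPref b n) = c'}.Infinite} with hS_def
  have hcS : c ∈ S := by
    have harb : ∀ m : ℕ, ∃ n, m ≤ n ∧ col (listPref b n) = c := by
      intro m
      obtain ⟨x, hwx, hxw, hxc⟩ := (hg m (w m) (hP m)).2.2.2.1
      rw [← hstep m] at hxw
      refine ⟨x.length, le_trans (hlen m) hwx.length_le, ?_⟩
      rw [hpref x (m + 1) hxw, hxc]
    intro hfin
    obtain ⟨M, hM⟩ := hfin.bddAbove
    obtain ⟨n, hn, hcn⟩ := harb (M + 1)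
    have := hM hcn
    omega
  have hlb : ∀ c' ∈ S, c ≤ c' := by
    intro c' hc'
    have : ∃ n ∈ {n | col (listPref b n) = c'}, u.length ≤ n := by
      by_contra h
      push_neg at h
      exact hc' ((Set.finite_Iio u.length).subset fun n hn => h n hn)
    obtain ⟨n, hn, hun⟩ := this
    have hupref : u <+: listPref b n := by
      rw [← hu_pref]
      exact stmt14_listPref_prefix b hun
    exact Nat.sInf_le ⟨listPref b n, hbranch n, hupref, hn⟩
  have hSinf : sInf S = c :=
    le_antisymm (Nat.sInf_le hcS) (hlb _ (Nat.sInf_mem ⟨c, hcS⟩))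
  have := hparity
  rw [ParityBranch, ← hS_def, hSinf] at this
  exact this
end

section
/- There exists a game with Nature G = (𝒢, Ω, v₀) with a Büchi winning condition and an Éloïse strategy φ_E such that for every Abélard strategy φ_A the set Outcomes(v₀, φ_E, φ_A) \ Ω is finite, yet for every k ∈ ℕ there exists an Abélard strategy φ_A with |Outcomes(v₀, φ_E, φ_A) \ Ω| ≥ k. Consequently CL(φ_E) = ℵ₀ and the supremum defining CL(φ_E) is not attained by any Abélard strategy. -/
open Cardinal

/-- The three players: Éloïse, Abélard and Nature. -/
inductive Player : Type
  | E
  | A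
  | N
  deriving DecidableEq

/-- An arena: a directed graph without dead-ends whose vertices are
partitioned among the three players (via the `owner` function). -/
structure Arena (V : Type) where
  Edge : V → V → Prop
  owner : V → Player
  no_dead : ∀ v, ∃ w, Edge v w

/-- The history `[p 0, …, p i]` of a play `p` up to time `i`. -/
def histUpTo {V : Type} (p : ℕ → V) (i : ℕ) : List V :=
  List.ofFn (fun j : Fin (i + 1) => p j.1)

/-- A play from `v0`: an infinite sequence following edges. -/
def IsPlay {V : Type} (A : Arena V) (v0 : V) (p : ℕ → V) : Prop :=
  p 0 = v0 ∧ ∀ i, A.Edge (p i) (p (i + 1))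

/-- The player `P` respects the strategy `φ` along the play `p`. -/
def Respects {V : Type} (A : Arena V) (P : Player) (φ : List V → V) (p : ℕ → V) : Prop :=
  ∀ i, A.owner (p i) = P → p (i + 1) = φ (histUpTo p i)

/-- `φ` is a strategy for player `P`: on every history ending in a vertex of `P`
it prescribes a successor of that vertex. -/
def IsStrategyFor {V : Type} (A : Arena V) (P : Player) (φ : List V → V) : Prop :=
  ∀ (l : List V) (v : V), A.owner v = P → A.Edge v (φ (l ++ [v]))

/-- The set of plays from `v0` in which Éloïse respects `φE` and Abélard respects `φA`
(Nature is unconstrained). -/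
def Outcomes {V : Type} (A : Arena V) (v0 : V) (φE φA : List V → V) : Set (ℕ → V) :=
  {p | IsPlay A v0 p ∧ Respects A Player.E φE p ∧ Respects A Player.A φA p}

/-- `l` is a (finite) prefix of the infinite word `p`. -/
def BPrefix {X : Type} (p : ℕ → X) (l : List X) : Prop :=
  ∀ i : Fin l.length, p i.1 = l.get i
/-- The type of Abélard strategies. -/
def AStrat {V : Type} (A : Arena V) : Type :=
  {φ : List V → V // IsStrategyFor A Player.A φ}

/-- The type of Éloïse strategies. -/
def EStrat {V : Type} (A : Arena V) : Type :=
  {φ : List V → V // IsStrategyFor A Player.E φ}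

/-- The cardinality leaking of an Éloïse strategy: the supremum, over Abélard
strategies, of the cardinality of the set of losing plays. -/
noncomputable def CL {V : Type} (A : Arena V) (v0 : V) (Ω : Set (ℕ → V))
    (φE : List V → V) : Cardinal :=
  ⨆ φA : AStrat A, Cardinal.mk ↥(Outcomes A v0 φE φA.1 \ Ω)

/-- The leaking value of a game: the infimum over Éloïse strategies of the
cardinality leaking. -/
noncomputable def LVal {V : Type} (A : Arena V) (v0 : V) (Ω : Set (ℕ → V)) : Cardinal :=
  ⨅ φE : EStrat A, CL A v0 Ω φE.1
/-- The Büchi winning condition with final vertices `F`: plays visiting `F`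
infinitely often. -/
def BuchiWC {V : Type} (F : Set V) : Set (ℕ → V) :=
  {p | {i | p i ∈ F}.Infinite}

/-- The reachability winning condition with targets `F`: plays visiting `F` at
least once. -/
def ReachWC {V : Type} (F : Set V) : Set (ℕ → V) :=
  {p | ∃ i, p i ∈ F}
namespace Stmt15Aux

abbrev Vx : Type := ℕ ⊕ ℕ ⊕ ℕ

def av (n : ℕ) : Vx := .inl n
def sv (n : ℕ) : Vx := .inr (.inl n)
def bv (n : ℕ) : Vx := .inr (.inr n)

def Edg : Vx → Vx → Prop
  | .inl n, .inl m => m = n + 1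
  | .inl n, .inr (.inl m) => m = n
  | .inr (.inl n), .inr (.inr j) => j ≤ n
  | .inr (.inr j), .inr (.inr j') => j' = j
  | _, _ => False

def own : Vx → Player
  | .inl _ => .A
  | _ => .N

def Ar : Arena Vx where
  Edge := Edg
  owner := own
  no_dead := by
    rintro (n | n | n)
    · exact ⟨.inl (n + 1), rfl⟩
    · exact ⟨.inr (.inr 0), Nat.zero_le n⟩
    · exact ⟨.inr (.inr n), rfl⟩

def Fv : Set Vx := Set.range Sum.inl

def φE : List Vx → Vx := fun _ => av 0

lemma own_ne_E (v : Vx) : own v ≠ .E := by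
  rcases v with n | n | n <;> simp [own]

lemma φE_strat : IsStrategyFor Ar .E φE := by
  intro l v hv
  exact absurd hv (own_ne_E v)

lemma respects_E (φ : List Vx → Vx) (p : ℕ → Vx) : Respects Ar .E φ p :=
  fun i h => absurd h (own_ne_E (p i))

lemma edg_a {n : ℕ} {w : Vx} (h : Edg (av n) w) : w = av (n + 1) ∨ w = sv n := by
  rcases w with m | m | m
  · have h' : m = n + 1 := h
    exact Or.inl (by simp [av, h'])
  · have h' : m = n := h
    exact Or.inr (by simp [sv, h'])
  · exact absurd h (by simp [Edg, av])

lemma edg_s {n : ℕ} {w : Vx} (h : Edg (sv n) w) : ∃ j ≤ n, w = bv j := by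
  rcases w with m | m | m
  · exact absurd h (by simp [Edg, sv])
  · exact absurd h (by simp [Edg, sv])
  · exact ⟨m, h, rfl⟩

lemma edg_b {j : ℕ} {w : Vx} (h : Edg (bv j) w) : w = bv j := by
  rcases w with m | m | m
  · exact absurd h (by simp [Edg, bv])
  · exact absurd h (by simp [Edg, bv])
  · have h' : m = j := h
    simp [bv, h']

/-- the canonical winning play -/
def cw : ℕ → Vx := fun i => av i

/-- the canonical history `[a 0, …, a i]` -/
def H (i : ℕ) : List Vx := histUpTo cw i

lemma histUpTo_congr {p q : ℕ → Vx} {i : ℕ} (h : ∀ m ≤ i, p m = q m) :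
    histUpTo p i = histUpTo q i := by
  unfold histUpTo
  congr 1
  funext j
  exact h j (Nat.lt_succ_iff.mp j.2)

lemma H_concat (n : ℕ) : H n = (List.ofFn fun j : Fin n => av j) ++ [av n] := by
  unfold H histUpTo cw
  rw [List.ofFn_succ']
  simp [Fin.last]

/-- losing play stopping at `n` going to `⊥_j` -/
def pl (n j : ℕ) : ℕ → Vx := fun i =>
  if i ≤ n then av i else if i = n + 1 then sv n else bv j

lemma pl_big {n j i : ℕ} (h : n + 2 ≤ i) : pl n j i = bv j := by
  unfold pl
  rw [if_neg (by omega), if_neg (by omega)]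

lemma pl_not_buchi (n j : ℕ) : pl n j ∉ BuchiWC Fv := by
  intro h
  have hsub : {i | pl n j i ∈ Fv} ⊆ Set.Iic n := by
    intro i hi
    by_contra hgt
    simp only [Set.mem_Iic, not_le] at hgt
    have : pl n j i = sv n ∨ pl n j i = bv j := by
      unfold pl
      rw [if_neg (by omega)]
      split <;> simp
    rcases hi with ⟨m, hm⟩
    rcases this with h' | h' <;> rw [h'] at hm <;> simp [sv, bv] at hm
  exact h.mono hsub (Set.finite_Iic n)

lemma cw_buchi : cw ∈ BuchiWC Fv := by
  have : {i | cw i ∈ Fv} = Set.univ := by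
    ext i; simp [cw, av, Fv]
  simpa [BuchiWC, this] using Set.infinite_univ

/-- forcing lemma: while `φA` keeps going along the canonical history, any
outcome follows the canonical play. -/
lemma force {φA : List Vx → Vx} {p : ℕ → Vx}
    (hp : p ∈ Outcomes Ar (av 0) φE φA) :
    ∀ m, (∀ i < m, φA (H i) = av (i + 1)) → ∀ i ≤ m, p i = av i := by
  intro m
  induction m with
  | zero =>
    intro _ i hi
    interval_cases i
    exact hp.1.1
  | succ m ih =>
    intro h i hi
    rcases Nat.lt_succ_iff_lt_or_eq.mp (Nat.lt_succ_of_le hi) with h' | h'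
    · exact ih (fun i hi => h i (hi.trans (Nat.lt_succ_self m))) i (Nat.lt_succ_iff.mp h')
    · subst h'
      have hall : ∀ i ≤ m, p i = av i :=
        ih fun i hi => h i (hi.trans (Nat.lt_succ_self m))
    -- respects at m
      have hresp : p (m + 1) = φA (histUpTo p m) :=
        hp.2.2 m (by rw [hall m le_rfl]; rfl)
      rw [hresp, histUpTo_congr (q := cw) (fun i hi => hall i hi)]
      exact h m (Nat.lt_succ_self m)

/-- structure lemma when `φA` deviates first at `n`. -/
lemma outcome_struct {φA : List Vx → Vx} (hφ : IsStrategyFor Ar .A φA)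
    {p : ℕ → Vx} (hp : p ∈ Outcomes Ar (av 0) φE φA) {n : ℕ}
    (hmin : ∀ i < n, φA (H i) = av (i + 1)) (hn : φA (H n) ≠ av (n + 1)) :
    ∃ j ≤ n, p = pl n j := by
  have hpre : ∀ i ≤ n, p i = av i := force hp n hmin
  have hEdge : Edg (av n) (φA (H n)) := by
    have := hφ (List.ofFn fun j : Fin n => av j) (av n) rfl
    rwa [← H_concat] at this
  have hsv : φA (H n) = sv n := (edg_a hEdge).resolve_left hn
  have hp1 : p (n + 1) = sv n := by
    have hresp : p (n + 1) = φA (histUpTo p n) :=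
      hp.2.2 n (by rw [hpre n le_rfl]; rfl)
    rw [hresp, histUpTo_congr (q := cw) hpre]
    exact hsv
  obtain ⟨j, hj, hbv⟩ : ∃ j ≤ n, p (n + 2) = bv j := by
    have := hp.1.2 (n + 1)
    rw [hp1] at this
    exact edg_s this
  have htail : ∀ m, n + 2 ≤ m → p m = bv j := by
    intro m hm
    obtain ⟨d, rfl⟩ := Nat.exists_eq_add_of_le hm
    induction d with
    | zero => exact hbv
    | succ d ihd =>
      have := hp.1.2 (n + 2 + d)
      rw [ihd (by omega)] at this
      rw [show n + 2 + (d+1) = n + 2 + d + 1 by omega]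
      exact edg_b this
  refine ⟨j, hj, funext fun i => ?_⟩
  unfold pl
  split
  · exact hpre i ‹_›
  · split
    · subst ‹i = n + 1›; exact hp1
    · exact htail i (by omega)

/-- Abélard strategy stopping at step `k`. -/
def stratA (k : ℕ) : List Vx → Vx := fun l =>
  match l.reverse with
  | .inl n :: _ => if n = k then sv n else av (n + 1)
  | _ => av 0

lemma stratA_concat (k : ℕ) (l : List Vx) (n : ℕ) :
    stratA k (l ++ [Sum.inl n]) = if n = k then sv n else av (n + 1) := by
  unfold stratA
  simp

lemma stratA_strat (k : ℕ) : IsStrategyFor Ar .A (stratA k) := by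
  intro l v hv
  rcases v with n | n | n
  · show Edg (av n) _
    rw [stratA_concat]
    split
    · show (n : ℕ) = n; rfl
    · show n + 1 = n + 1; rfl
  · exact absurd hv (by simp [Ar, own])
  · exact absurd hv (by simp [Ar, own])

lemma stratA_H (k m : ℕ) : stratA k (H m) = if m = k then sv m else av (m + 1) := by
  rw [H_concat]
  exact stratA_concat k _ m

lemma pl_mem (k : ℕ) {j : ℕ} (hj : j ≤ k) :
    pl k j ∈ Outcomes Ar (av 0) φE (stratA k) := by
  refine ⟨⟨by simp [pl], ?_⟩, respects_E _ _, ?_⟩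
  · intro i
    show Edg (pl k j i) (pl k j (i + 1))
    unfold pl
    rcases Nat.lt_trichotomy i k with h | h | h
    · rw [if_pos h.le, if_pos (by omega)]; rfl
    · subst h
      rw [if_pos le_rfl, if_neg (by omega), if_pos rfl]
      show i = i; rfl
    · rw [if_neg (by omega)]
      rcases Nat.lt_or_ge i (k + 2) with h' | h'
      · rw [if_pos (by omega), if_neg (by omega), if_neg (by omega)]
        exact hj
      · rw [if_neg (by omega), if_neg (by omega), if_neg (by omega)]
        rfl
  · intro i hown
    have hi : i ≤ k := by
      by_contra hgt
      have : pl k j i = sv k ∨ pl k j i = bv j := by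
        unfold pl
        rw [if_neg (by omega)]
        split <;> simp
      rcases this with h' | h' <;> rw [h'] at hown <;>
        simp [Ar, own, sv, bv] at hown
    have hagree : ∀ m ≤ i, pl k j m = cw m := fun m hm => by
      unfold pl cw; rw [if_pos (hm.trans hi)]
    rw [histUpTo_congr hagree]
    show pl k j (i + 1) = stratA k (H i)
    rw [stratA_H]
    rcases Nat.lt_or_ge i k with h | h
    · rw [if_neg (by omega)]
      unfold pl
      rw [if_pos (by omega)]
    · have : i = k := le_antisymm hi h
      subst this
      rw [if_pos rfl]
      unfold pl
      rw [if_neg (by omega), if_pos rfl]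

lemma finite_losing (φA : List Vx → Vx) (hφ : IsStrategyFor Ar .A φA) :
    (Outcomes Ar (av 0) φE φA \ BuchiWC Fv).Finite := by
  by_cases h : ∀ m, φA (H m) = av (m + 1)
  · refine Set.Finite.subset (Set.finite_singleton cw) ?_
    intro p hp
    have : p = cw := funext fun i => force hp.1 i (fun m _ => h m) i le_rfl
    exact this ▸ rfl
  · push_neg at h
    have hex : ∃ n, φA (H n) ≠ av (n + 1) := h
    classical
    set n := Nat.find hex with hn
    have hmin : ∀ i < n, φA (H i) = av (i + 1) := fun i hi =>
      not_not.mp (Nat.find_min hex hi)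
    have hdev : φA (H n) ≠ av (n + 1) := Nat.find_spec hex
    refine Set.Finite.subset ((Set.finite_Iic n).image (pl n)) ?_
    intro p hp
    obtain ⟨j, hj, rfl⟩ := outcome_struct hφ hp.1 hmin hdev
    exact ⟨j, hj, rfl⟩

lemma pl_injective (k : ℕ) : Function.Injective (pl k) := by
  intro j1 j2 h
  have := congrFun h (k + 2)
  rw [pl_big le_rfl, pl_big le_rfl] at this
  simpa [bv] using this

lemma card_ge (k : ℕ) :
    (k : Cardinal) ≤ Cardinal.mk ↥(Outcomes Ar (av 0) φE (stratA k) \ BuchiWC Fv) := by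
  have hf : ∀ j : Fin k, pl k j ∈ Outcomes Ar (av 0) φE (stratA k) \ BuchiWC Fv :=
    fun j => ⟨pl_mem k (le_of_lt j.2), pl_not_buchi k j⟩
  have hinj : Function.Injective (fun j : Fin k =>
      (⟨pl k j, hf j⟩ : ↥(Outcomes Ar (av 0) φE (stratA k) \ BuchiWC Fv))) := by
    intro j1 j2 h
    exact Fin.ext (pl_injective k (congrArg Subtype.val h))
  calc (k : Cardinal) = Cardinal.mk (Fin k) := (Cardinal.mk_fin k).symm
    _ ≤ _ := Cardinal.mk_le_of_injective hinj

end Stmt15Aux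

namespace Stmt15Aux

lemma CL_eq : CL Ar (av 0) (BuchiWC Fv) φE = Cardinal.aleph0 := by
  have hne : Nonempty (AStrat Ar) := ⟨⟨stratA 0, stratA_strat 0⟩⟩
  apply le_antisymm
  · exact ciSup_le' fun φA => ((finite_losing φA.1 φA.2).lt_aleph0).le
  · rw [Cardinal.aleph0_le]
    intro n
    calc (n : Cardinal) ≤ _ := card_ge n
      _ ≤ CL Ar (av 0) (BuchiWC Fv) φE :=
        le_ciSup (Cardinal.bddAbove_range _) (⟨stratA n, stratA_strat n⟩ : AStrat Ar)

end Stmt15Aux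

/-- There is a game with Nature with a Büchi winning condition
and an Éloïse strategy `φ_E` such that against every Abélard strategy the set of
losing plays is finite, while for every `k` some Abélard strategy produces at
least `k` losing plays; hence `CL(φ_E) = ℵ₀` and the supremum defining `CL(φ_E)`
is not attained. -/
theorem stmt15 :
    ∃ (V : Type) (_ : Countable V) (A : Arena V) (F : Set V) (v0 : V)
      (φE : List V → V),
      IsStrategyFor A Player.E φE ∧
      (∀ φA, IsStrategyFor A Player.A φA →
        (Outcomes A v0 φE φA \ BuchiWC F).Finite) ∧
      (∀ k : ℕ, ∃ φA, IsStrategyFor A Player.A φA ∧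
        (k : Cardinal) ≤ Cardinal.mk ↥(Outcomes A v0 φE φA \ BuchiWC F)) ∧
      CL A v0 (BuchiWC F) φE = Cardinal.aleph0 ∧
      (∀ φA, IsStrategyFor A Player.A φA →
        Cardinal.mk ↥(Outcomes A v0 φE φA \ BuchiWC F) ≠ CL A v0 (BuchiWC F) φE) := by
  refine ⟨Stmt15Aux.Vx, inferInstance, Stmt15Aux.Ar, Stmt15Aux.Fv, Stmt15Aux.av 0,
    Stmt15Aux.φE, Stmt15Aux.φE_strat, Stmt15Aux.finite_losing,
    fun k => ⟨Stmt15Aux.stratA k, Stmt15Aux.stratA_strat k, Stmt15Aux.card_ge k⟩,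
    Stmt15Aux.CL_eq, fun φA hφ => ?_⟩
  rw [Stmt15Aux.CL_eq]
  exact ne_of_lt ((Stmt15Aux.finite_losing φA hφ).lt_aleph0)
end

section
/- There exists a game with Nature G = (𝒢, Ω, v₀) with a reachability winning condition in which Éloïse owns no vertices (V_E = ∅), so that she has a unique (trivial) strategy φ_E, such that for every Abélard strategy φ_A the set Outcomes(v₀, φ_E, φ_A) \ Ω is finite and nonempty, and for every n ≥ 1 some Abélard strategy achieves exactly n losing plays; consequently LVal(G) = CL(φ_E) = ℵ₀ and no Abélard strategy φ_A satisfies |Outcomes(v₀, φ_E, φ_A) \ Ω| = ℵ₀. -/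
open Cardinal

namespace S16

inductive W : Type
  | b : ℕ → W
  | d : ℕ → W
  | s : ℕ → W
  deriving DecidableEq

def edge : W → W → Prop
  | .b k, .b m => m = k + 1
  | .b k, .d m => m = k
  | .d k, .s i => i ≤ k
  | .s i, .s j => j = i
  | _, _ => False

def own : W → Player
  | .b _ => .A
  | _ => .N

instance : Countable W := by
  have h : Function.Injective (fun w : W => match w with
    | .b k => ((0 : ℕ), k) | .d k => (1, k) | .s k => (2, k)) := by
    intro x y hxy
    cases x <;> cases y <;> simp_all
  exact h.countable

def Ar : Arena W where
  Edge := edge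
  owner := own
  no_dead v := by
    cases v with
    | b k => exact ⟨.b (k + 1), rfl⟩
    | d k => exact ⟨.s 0, Nat.zero_le k⟩
    | s i => exact ⟨.s i, rfl⟩

lemma own_ne_E (v : W) : own v ≠ Player.E := by cases v <;> simp [own]

lemma own_A {v : W} (h : own v = Player.A) : ∃ k, v = .b k := by
  cases v <;> simp_all [own]

lemma edge_b {k : ℕ} {w : W} (h : edge (.b k) w) : w = .b (k + 1) ∨ w = .d k := by
  cases w <;> simp_all [edge]

lemma edge_d {k : ℕ} {w : W} (h : edge (.d k) w) : ∃ i ≤ k, w = .s i := by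
  cases w <;> simp_all [edge]

lemma edge_s {i : ℕ} {w : W} (h : edge (.s i) w) : w = .s i := by
  cases w <;> simp_all [edge]

def pb : ℕ → W := fun n => .b n

def pd (K i : ℕ) : ℕ → W := fun n =>
  if n ≤ K then .b n else if n = K + 1 then .d K else .s i

def L (k : ℕ) : List W := List.ofFn fun j : Fin (k + 1) => .b j.1

lemma histUpTo_eq_L {p : ℕ → W} {k : ℕ} (h : ∀ j ≤ k, p j = .b j) :
    histUpTo p k = L k := by
  unfold histUpTo L
  rw [List.ofFn_inj]
  funext j
  exact h j.1 (Nat.lt_succ_iff.mp j.2)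

lemma L_concat (k : ℕ) :
    L k = (List.ofFn fun j : Fin k => W.b j.1) ++ [W.b k] := by
  unfold L
  rw [List.ofFn_succ']
  simp [List.concat_eq_append, Fin.last]

lemma strat_cases {φA : List W → W} (h : IsStrategyFor Ar Player.A φA) (k : ℕ) :
    φA (L k) = .b (k + 1) ∨ φA (L k) = .d k := by
  have := h (List.ofFn fun j : Fin k => W.b j.1) (.b k) rfl
  rw [← L_concat] at this
  exact edge_b this

lemma shape {p : ℕ → W} (hp : IsPlay Ar (.b 0) p) :
    (∀ n, p n = .b n) ∨ ∃ K i, i ≤ K ∧ p = pd K i := by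
  by_cases h : ∀ n, p n = .b n
  · exact Or.inl h
  · right
    push_neg at h
    have hex : ∃ n, p n ≠ .b n := h
    set N := Nat.find hex with hN
    have hNspec : p N ≠ .b N := Nat.find_spec hex
    have hlt : ∀ j < N, p j = .b j := fun j hj => by
      by_contra hc; exact Nat.find_min hex hj hc
    have hN0 : N ≠ 0 := by
      intro h0; apply hNspec; rw [h0]; exact hp.1
    obtain ⟨K, hK⟩ := Nat.exists_eq_succ_of_ne_zero hN0
    have hpK : p K = .b K := hlt K (by omega)
    have he1 : edge (.b K) (p N) := by
      have := hp.2 K; rw [hpK] at this; rw [hK]; exact this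
    have hpN : p N = .d K := by
      rcases edge_b he1 with h1 | h1
      · exact absurd (by rw [h1, hK]) hNspec
      · exact h1
    have he2 : edge (.d K) (p (N + 1)) := by
      have := hp.2 N; rw [hpN] at this; exact this
    obtain ⟨i, hik, hpN1⟩ := edge_d he2
    have hs : ∀ m, p (N + 1 + m) = .s i := by
      intro m
      induction m with
      | zero => exact hpN1
      | succ m ih =>
        have := hp.2 (N + 1 + m); rw [ih] at this
        have := edge_s this
        rw [← this]; ring_nf
    refine ⟨K, i, hik, funext fun n => ?_⟩
    unfold pd
    rcases Nat.lt_trichotomy n N with hn | hn | hn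
    · rw [if_pos (by omega), hlt n hn]
    · rw [if_neg (by omega), if_pos (by omega), hn, hpN]
    · rw [if_neg (by omega), if_neg (by omega)]
      have : n = N + 1 + (n - N - 1) := by omega
      rw [this, hs]

lemma pd_le {K i n : ℕ} (h : n ≤ K) : pd K i n = .b n := if_pos h

lemma hist_pd {K i n : ℕ} (h : n ≤ K) : histUpTo (pd K i) n = L n :=
  histUpTo_eq_L fun _ hj => pd_le (le_trans hj h)

lemma hist_pb (n : ℕ) : histUpTo pb n = L n := histUpTo_eq_L fun _ _ => rfl

lemma respects_E (φE : List W → W) (p : ℕ → W) : Respects Ar Player.E φE p :=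
  fun i h => absurd h (own_ne_E (p i))

lemma outcomes_go {φE φA : List W → W} (h : ∀ k, φA (L k) = .b (k + 1)) :
    Outcomes Ar (.b 0) φE φA = {pb} := by
  ext p
  constructor
  · rintro ⟨hp, -, hA⟩
    rcases shape hp with hb | ⟨K, i, hik, rfl⟩
    · exact funext hb
    · exfalso
      have hKA : own (pd K i K) = Player.A := by rw [pd_le le_rfl]; rfl
      have := hA K hKA
      rw [hist_pd le_rfl, h K] at this
      unfold pd at this
      rw [if_neg (by omega), if_pos rfl] at this
      exact W.noConfusion this
  · rintro rfl
    refine ⟨⟨rfl, fun n => rfl⟩, respects_E φE pb, fun n hn => ?_⟩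
    rw [hist_pb, h n]; rfl

lemma pd_mem {φE φA : List W → W} {K : ℕ}
    (h1 : ∀ k < K, φA (L k) = .b (k + 1)) (h2 : φA (L K) = .d K)
    {i : ℕ} (hik : i ≤ K) : pd K i ∈ Outcomes Ar (.b 0) φE φA := by
  refine ⟨⟨pd_le (Nat.zero_le K), fun n => ?_⟩, respects_E φE _, fun n hn => ?_⟩
  · show edge (pd K i n) (pd K i (n + 1))
    unfold pd
    rcases Nat.lt_trichotomy n K with hn | hn | hn
    · rw [if_pos (by omega), if_pos (by omega)]; simp [edge]
    · rw [if_pos (by omega), if_neg (by omega), if_pos (by omega)]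
      subst hn; simp [edge]
    · rcases Nat.eq_or_lt_of_le hn with hn' | hn'
      · rw [if_neg (by omega), if_pos (by omega), if_neg (by omega), if_neg (by omega)]
        exact hik
      · rw [if_neg (by omega), if_neg (by omega), if_neg (by omega), if_neg (by omega)]
        simp [edge]
  · have hnK : n ≤ K := by
      by_contra hc
      obtain ⟨k, hk⟩ := own_A hn
      unfold pd at hk
      rw [if_neg hc] at hk
      by_cases h' : n = K + 1 <;> simp [h'] at hk
    rw [hist_pd hnK]
    rcases Nat.eq_or_lt_of_le hnK with h' | h'
    · subst h'; rw [h2]; unfold pd; rw [if_neg (by omega), if_pos rfl]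
    · rw [h1 n h']; exact pd_le (by omega)

lemma outcomes_stop {φE φA : List W → W} {K : ℕ}
    (h1 : ∀ k < K, φA (L k) = .b (k + 1)) (h2 : φA (L K) = .d K) :
    Outcomes Ar (.b 0) φE φA = Set.range (fun i : Fin (K + 1) => pd K i.1) := by
  ext p
  constructor
  · rintro ⟨hp, -, hA⟩
    rcases shape hp with hb | ⟨K', i, hik, rfl⟩
    · exfalso
      have hKA : own (p K) = Player.A := by rw [hb K]; rfl
      have := hA K hKA
      rw [histUpTo_eq_L (fun j _ => hb j), h2, hb (K + 1)] at this
      exact W.noConfusion this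
    · have hKK : K' = K := by
        rcases Nat.lt_trichotomy K' K with hn | hn | hn
        · exfalso
          have hKA : own (pd K' i K') = Player.A := by rw [pd_le le_rfl]; rfl
          have := hA K' hKA
          rw [hist_pd le_rfl, h1 K' hn] at this
          unfold pd at this
          rw [if_neg (by omega), if_pos rfl] at this
          exact W.noConfusion this
        · exact hn
        · exfalso
          have hKA : own (pd K' i K) = Player.A := by rw [pd_le (by omega)]; rfl
          have := hA K hKA
          rw [hist_pd (by omega : K ≤ K'), h2] at this
          unfold pd at this
          rw [if_pos (by omega : K + 1 ≤ K')] at this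
          exact W.noConfusion this
      subst hKK
      exact ⟨⟨i, by omega⟩, rfl⟩
  · rintro ⟨i, rfl⟩
    exact pd_mem h1 h2 (by omega)

lemma pd_inj (K : ℕ) : Function.Injective (fun i : Fin (K + 1) => pd K i.1) := by
  intro i j hij
  have hc1 : ¬(K + 2 ≤ K) := by omega
  have hc2 : ¬(K + 2 = K + 1) := by omega
  have := congrFun hij (K + 2)
  simp only [pd, if_neg hc1, if_neg hc2] at this
  exact Fin.ext (W.s.inj this)

/-- Case analysis on an Abélard strategy. -/
lemma strat_dichotomy {φA : List W → W} (h : IsStrategyFor Ar Player.A φA) :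
    (∀ k, φA (L k) = .b (k + 1)) ∨
      ∃ K, (∀ k < K, φA (L k) = .b (k + 1)) ∧ φA (L K) = .d K := by
  by_cases hs : ∃ k, φA (L k) = .d k
  · right
    refine ⟨Nat.find hs, fun k hk => ?_, Nat.find_spec hs⟩
    rcases strat_cases h k with h' | h'
    · exact h'
    · exact absurd h' (Nat.find_min hs hk)
  · left
    push_neg at hs
    intro k
    rcases strat_cases h k with h' | h'
    · exact h'
    · exact absurd h' (hs k)

lemma reach_empty : ReachWC (∅ : Set W) = ∅ := by
  ext p; simp [ReachWC]

/-- The strategy that walks along `b` until `K`, then stops. -/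
def stopAt (K : ℕ) : List W → W := fun l =>
  match l.getLast? with
  | some (.b k) => if k = K then .d k else .b (k + 1)
  | _ => .b 0

lemma stopAt_strat (K : ℕ) : IsStrategyFor Ar Player.A (stopAt K) := by
  intro l v hv
  obtain ⟨k, rfl⟩ := own_A hv
  show edge _ (stopAt K (l ++ [W.b k]))
  unfold stopAt
  rw [List.getLast?_concat]
  by_cases h : k = K <;> simp [h, edge]

lemma stopAt_L (K k : ℕ) : stopAt K (L k) = if k = K then .d k else .b (k + 1) := by
  unfold stopAt
  rw [L_concat, List.getLast?_concat]

/-- The strategy that never stops. -/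
def goOn : List W → W := fun l =>
  match l.getLast? with
  | some (.b k) => .b (k + 1)
  | _ => .b 0

lemma goOn_strat : IsStrategyFor Ar Player.A goOn := by
  intro l v hv
  obtain ⟨k, rfl⟩ := own_A hv
  show edge _ (goOn (l ++ [W.b k]))
  unfold goOn
  rw [List.getLast?_concat]
  simp [edge]

lemma goOn_L (k : ℕ) : goOn (L k) = .b (k + 1) := by
  unfold goOn
  rw [L_concat, List.getLast?_concat]

lemma card_stopAt (φE : List W → W) (K : ℕ) :
    Cardinal.mk ↥(Outcomes Ar (.b 0) φE (stopAt K) \ ReachWC (∅ : Set W)) =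
      ((K + 1 : ℕ) : Cardinal) := by
  have h1 : ∀ k < K, stopAt K (L k) = W.b (k + 1) := fun k hk => by
    rw [stopAt_L, if_neg (Nat.ne_of_lt hk)]
  have h2 : stopAt K (L K) = W.d K := by rw [stopAt_L, if_pos rfl]
  rw [reach_empty, Set.diff_empty, outcomes_stop h1 h2,
    Cardinal.mk_range_eq _ (pd_inj K)]
  simp

end S16

/-- There is a game with Nature with a reachability winning
condition in which Éloïse owns no vertex (so all her strategies behave alike),
such that against every Abélard strategy the set of losing plays is finite and
nonempty, for every `n ≥ 1` some Abélard strategy yields exactly `n` losing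
plays, `LVal(G) = CL(φ_E) = ℵ₀`, and no Abélard strategy yields exactly `ℵ₀`
losing plays. -/
theorem stmt16 :
    ∃ (V : Type) (_ : Countable V) (A : Arena V) (F : Set V) (v0 : V),
      (∀ v, A.owner v ≠ Player.E) ∧
      ∀ φE : List V → V,
        (∀ φA, IsStrategyFor A Player.A φA →
          (Outcomes A v0 φE φA \ ReachWC F).Finite ∧
          (Outcomes A v0 φE φA \ ReachWC F).Nonempty) ∧
        (∀ n : ℕ, 1 ≤ n → ∃ φA, IsStrategyFor A Player.A φA ∧
          Cardinal.mk ↥(Outcomes A v0 φE φA \ ReachWC F) = (n : Cardinal)) ∧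
        LVal A v0 (ReachWC F) = Cardinal.aleph0 ∧
        CL A v0 (ReachWC F) φE = Cardinal.aleph0 ∧
        (∀ φA, IsStrategyFor A Player.A φA →
          Cardinal.mk ↥(Outcomes A v0 φE φA \ ReachWC F) ≠ Cardinal.aleph0) := by
  refine ⟨S16.W, inferInstance, S16.Ar, ∅, .b 0, fun v => S16.own_ne_E v, fun φE => ?_⟩
  have hfin : ∀ (φ : List S16.W → S16.W) φA, IsStrategyFor S16.Ar Player.A φA →
      (Outcomes S16.Ar (.b 0) φ φA \ ReachWC (∅ : Set S16.W)).Finite ∧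
      (Outcomes S16.Ar (.b 0) φ φA \ ReachWC (∅ : Set S16.W)).Nonempty := by
    intro φ φA hφA
    rw [S16.reach_empty, Set.diff_empty]
    rcases S16.strat_dichotomy hφA with h | ⟨K, h1, h2⟩
    · rw [S16.outcomes_go h]
      exact ⟨Set.finite_singleton _, Set.singleton_nonempty _⟩
    · rw [S16.outcomes_stop h1 h2]
      exact ⟨Set.finite_range _, ⟨S16.pd K 0, ⟨0, rfl⟩⟩⟩
  have hexact : ∀ (φ : List S16.W → S16.W) (n : ℕ), 1 ≤ n →
      ∃ φA, IsStrategyFor S16.Ar Player.A φA ∧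
      Cardinal.mk ↥(Outcomes S16.Ar (.b 0) φ φA \ ReachWC (∅ : Set S16.W)) =
        (n : Cardinal) := by
    intro φ n hn
    refine ⟨S16.stopAt (n - 1), S16.stopAt_strat (n - 1), ?_⟩
    rw [S16.card_stopAt]
    congr 1
    omega
  have hCL : ∀ φ : List S16.W → S16.W,
      CL S16.Ar (.b 0) (ReachWC (∅ : Set S16.W)) φ = Cardinal.aleph0 := by
    intro φ
    have hbdd : BddAbove (Set.range fun φA : AStrat S16.Ar =>
        Cardinal.mk ↥(Outcomes S16.Ar (.b 0) φ φA.1 \ ReachWC (∅ : Set S16.W))) := by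
      refine ⟨Cardinal.aleph0, ?_⟩
      rintro x ⟨φA, rfl⟩
      exact (Cardinal.lt_aleph0_iff_set_finite.2 (hfin φ φA.1 φA.2).1).le
    refine le_antisymm (ciSup_le' fun φA =>
      (Cardinal.lt_aleph0_iff_set_finite.2 (hfin φ φA.1 φA.2).1).le) ?_
    rw [Cardinal.aleph0_le]
    intro n
    obtain ⟨φA, hφA, hcard⟩ := hexact φ (n + 1) (by omega)
    calc (n : Cardinal) ≤ ((n + 1 : ℕ) : Cardinal) := by
          rw [Nat.cast_le]; omega
      _ = Cardinal.mk ↥(Outcomes S16.Ar (.b 0) φ φA \ ReachWC (∅ : Set S16.W)) :=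
          hcard.symm
      _ ≤ _ := le_ciSup hbdd ⟨φA, hφA⟩
  have hne : Nonempty (EStrat S16.Ar) :=
    ⟨⟨fun _ => .b 0, fun l v hv => absurd hv (S16.own_ne_E v)⟩⟩
  refine ⟨hfin φE, hexact φE, ?_, hCL φE, fun φA hφA h =>
    (Cardinal.lt_aleph0_iff_set_finite.2 (hfin φE φA hφA).1).ne h⟩
  unfold LVal
  rw [show (fun φE' : EStrat S16.Ar => CL S16.Ar (.b 0) (ReachWC (∅ : Set S16.W)) φE'.1) =
    fun _ => Cardinal.aleph0 from funext fun φE' => hCL φE'.1]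
  exact ciInf_const
end
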